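/- arXiv:1704.03897 — 5 statements merged into one kernel-verified Lean document; each statement's English description precedes it below -/
import Mathlib

section
/- For n ≥ 5, the commutator subgroup WB_n' of the welded braid group WB_n is perfect, i.e. equals its own commutator subgroup. -/
/-- Generators: `Sum.inl i` is σ_{i+1}, `Sum.inr i` is ρ_{i+1}. -/
abbrev WGen (m : ℕ) := Fin m ⊕ Fin m

def sg {m : ℕ} (i : Fin m) : FreeGroup (WGen m) := FreeGroup.of (Sum.inl i)
def rg {m : ℕ} (i : Fin m) : FreeGroup (WGen m) := FreeGroup.of (Sum.inr i)

/-- The defining relators of the welded braid group on `m+1` strands (`m` pairs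
of generators): far commutations, braid relations, the symmetric relations,
the mixed relations and the forbidden relations. -/
def weldedRels (m : ℕ) : Set (FreeGroup (WGen m)) :=
  (⋃ (i : Fin m) (j : Fin m) (_ : (i : ℕ) + 1 < (j : ℕ) ∨ (j : ℕ) + 1 < (i : ℕ)),
    ({sg i * sg j * (sg i)⁻¹ * (sg j)⁻¹,
      rg i * rg j * (rg i)⁻¹ * (rg j)⁻¹,
      sg i * rg j * (sg i)⁻¹ * (rg j)⁻¹} : Set (FreeGroup (WGen m)))) ∪
  (⋃ (i : Fin m) (j : Fin m) (_ : (j : ℕ) = (i : ℕ) + 1),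
    ({sg i * sg j * sg i * (sg j * sg i * sg j)⁻¹,
      rg i * rg j * rg i * (rg j * rg i * rg j)⁻¹,
      rg i * rg j * sg i * (sg j * rg i * rg j)⁻¹,
      rg i * sg j * sg i * (sg j * sg i * rg j)⁻¹} : Set (FreeGroup (WGen m)))) ∪
  (⋃ (i : Fin m), ({rg i * rg i} : Set (FreeGroup (WGen m))))

/-- The welded braid group on `n` strands. -/
abbrev WB (n : ℕ) := PresentedGroup (weldedRels (n - 1))

namespace WBPerfectAux

open scoped commutatorElement

/-- Two purely equational group lemmas. -/
private lemma key {H : Type*} [Group H] (a b : H) (ha : a * a = 1) (hb : b * b = 1)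
    (hbr : a * b * a = b * a * b) (hab : a * b = b * a) : a = b := by
  have h2 : (a * b) * (a * b) = 1 := by
    have : (a * b) * (a * b) = a * (b * a) * b := by group
    rw [this, ← hab]
    have : a * (a * b) * b = (a * a) * (b * b) := by group
    rw [this, ha, hb, one_mul]
  have h3 : ((a * b) * (a * b)) * (a * b) = 1 := by
    have : ((a * b) * (a * b)) * (a * b) = (a * b * a) * (b * a * b) := by group
    rw [this, ← hbr]
    have : (a * b * a) * (a * b * a) = a * b * (a * a) * (b * a) := by group
    rw [this, ha]
    have : a * b * 1 * (b * a) = a * (b * b) * a := by group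
    rw [this, hb]
    have : a * 1 * a = a * a := by group
    rw [this, ha]
  rw [h2, one_mul] at h3
  exact (mul_left_cancel (h3.trans ha.symm)).symm

private lemma far_key {H : Type*} [Group H] (a b k : H) (hb : b * b = 1)
    (hak : a * k = k * a) (hbk : b * k = k * b)
    (hcomm : (a * b) * (b * k) = (b * k) * (a * b)) : a * b = b * a := by
  have h1 : a * k = ((b * a) * b) * k := by
    calc a * k = a * (b * b) * k := by rw [hb]; group
    _ = (a * b) * (b * k) := by group
    _ = (b * k) * (a * b) := hcomm
    _ = b * (k * a) * b := by group
    _ = b * (a * k) * b := by rw [← hak]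
    _ = (b * a) * (k * b) := by group
    _ = (b * a) * (b * k) := by rw [← hbk]
    _ = ((b * a) * b) * k := by group
  have h2 : a = (b * a) * b := mul_right_cancel h1
  calc a * b = ((b * a) * b) * b := by rw [← h2]
  _ = (b * a) * (b * b) := by group
  _ = b * a := by rw [hb, mul_one]

variable {m : ℕ}

/-- The canonical projection from the free group to `PresentedGroup (weldedRels m)`
followed by the projection to the quotient by the second commutator subgroup. -/
noncomputable abbrev Km (m : ℕ) : Subgroup (PresentedGroup (weldedRels m)) :=
  ⁅commutator (PresentedGroup (weldedRels m)), commutator (PresentedGroup (weldedRels m))⁆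

instance : (Km m).Normal := Subgroup.commutator_normal _ _

abbrev Qm (m : ℕ) := PresentedGroup (weldedRels m) ⧸ Km m

noncomputable abbrev φm (m : ℕ) : PresentedGroup (weldedRels m) →* Qm m :=
  QuotientGroup.mk' (Km m)

noncomputable abbrev ψm (m : ℕ) : FreeGroup (WGen m) →* Qm m :=
  (φm m).comp (PresentedGroup.mk (weldedRels m))

noncomputable abbrev sQ (i : Fin m) : Qm m := ψm m (sg i)
noncomputable abbrev rQ (i : Fin m) : Qm m := ψm m (rg i)

lemma ψ_rel {w : FreeGroup (WGen m)} (hw : w ∈ weldedRels m) : ψm m w = 1 := by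
  have h1 : PresentedGroup.mk (weldedRels m) w = 1 :=
    (QuotientGroup.eq_one_iff w).mpr (Subgroup.subset_normalClosure hw)
  show φm m (PresentedGroup.mk (weldedRels m) w) = 1
  rw [h1, map_one]

/-! Membership of the needed relators. -/

lemma mem_rr_far (i j : Fin m) (h : (i : ℕ) + 1 < (j : ℕ) ∨ (j : ℕ) + 1 < (i : ℕ)) :
    rg i * rg j * (rg i)⁻¹ * (rg j)⁻¹ ∈ weldedRels m := by
  refine Set.mem_union_left _ (Set.mem_union_left _ ?_)
  simp only [Set.mem_iUnion]
  exact ⟨i, j, h, by simp⟩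

lemma mem_sr_far (i j : Fin m) (h : (i : ℕ) + 1 < (j : ℕ) ∨ (j : ℕ) + 1 < (i : ℕ)) :
    sg i * rg j * (sg i)⁻¹ * (rg j)⁻¹ ∈ weldedRels m := by
  refine Set.mem_union_left _ (Set.mem_union_left _ ?_)
  simp only [Set.mem_iUnion]
  exact ⟨i, j, h, by simp⟩

lemma mem_rrr (i j : Fin m) (h : (j : ℕ) = (i : ℕ) + 1) :
    rg i * rg j * rg i * (rg j * rg i * rg j)⁻¹ ∈ weldedRels m := by
  refine Set.mem_union_left _ (Set.mem_union_right _ ?_)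
  simp only [Set.mem_iUnion]
  exact ⟨i, j, h, by simp⟩

lemma mem_rrs (i j : Fin m) (h : (j : ℕ) = (i : ℕ) + 1) :
    rg i * rg j * sg i * (sg j * rg i * rg j)⁻¹ ∈ weldedRels m := by
  refine Set.mem_union_left _ (Set.mem_union_right _ ?_)
  simp only [Set.mem_iUnion]
  exact ⟨i, j, h, by simp⟩

lemma mem_rr (i : Fin m) : rg i * rg i ∈ weldedRels m := by
  refine Set.mem_union_right _ ?_
  simp only [Set.mem_iUnion]
  exact ⟨i, by simp⟩

/-! The relations in `Qm m`. -/

lemma rQ_sq (i : Fin m) : rQ i * rQ i = 1 := by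
  have h1 := ψ_rel (mem_rr i)
  rwa [map_mul] at h1

lemma rQ_far (i j : Fin m) (h : (i : ℕ) + 1 < (j : ℕ) ∨ (j : ℕ) + 1 < (i : ℕ)) :
    rQ i * rQ j = rQ j * rQ i := by
  have h1 := ψ_rel (mem_rr_far i j h)
  rw [map_mul, map_mul, map_mul, map_inv, map_inv, mul_inv_eq_one,
    mul_inv_eq_iff_eq_mul] at h1
  exact h1

lemma sQ_rQ_far (i j : Fin m) (h : (i : ℕ) + 1 < (j : ℕ) ∨ (j : ℕ) + 1 < (i : ℕ)) :
    sQ i * rQ j = rQ j * sQ i := by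
  have h1 := ψ_rel (mem_sr_far i j h)
  rw [map_mul, map_mul, map_mul, map_inv, map_inv, mul_inv_eq_one,
    mul_inv_eq_iff_eq_mul] at h1
  exact h1

lemma rQ_braid (i j : Fin m) (h : (j : ℕ) = (i : ℕ) + 1) :
    rQ i * rQ j * rQ i = rQ j * rQ i * rQ j := by
  have h1 := ψ_rel (mem_rrr i j h)
  rw [map_mul, map_inv, mul_inv_eq_one, map_mul, map_mul, map_mul] at h1
  exact h1

lemma rQ_mixed (i j : Fin m) (h : (j : ℕ) = (i : ℕ) + 1) :
    rQ i * rQ j * sQ i = sQ j * rQ i * rQ j := by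
  have h1 := ψ_rel (mem_rrs i j h)
  rw [map_mul, map_inv, mul_inv_eq_one, map_mul, map_mul, map_mul] at h1
  exact h1

/-! Commutator facts. -/

lemma second_commutator_bot : ⁅commutator (Qm m), commutator (Qm m)⁆ = ⊥ := by
  have hsurj : Function.Surjective (φm m) := QuotientGroup.mk'_surjective _
  have h1 : commutator (Qm m) = Subgroup.map (φm m) (commutator (PresentedGroup (weldedRels m))) := by
    rw [commutator_def, commutator_def, Subgroup.map_commutator,
      Subgroup.map_top_of_surjective _ hsurj]
  rw [h1, ← Subgroup.map_commutator, Subgroup.map_eq_bot_iff, QuotientGroup.ker_mk']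

lemma comm_of_mem (x y : Qm m) (hx : x ∈ commutator (Qm m)) (hy : y ∈ commutator (Qm m)) :
    x * y = y * x := by
  have h1 : ⁅x, y⁆ ∈ ⁅commutator (Qm m), commutator (Qm m)⁆ := Subgroup.commutator_mem_commutator hx hy
  rw [second_commutator_bot, Subgroup.mem_bot] at h1
  exact commutatorElement_eq_one_iff_commute.mp h1

/-- Abelianization facts: the images of the `rQ i` in the abelianization agree. -/
lemma ab_rQ_braid (i j : Fin m) (h : (j : ℕ) = (i : ℕ) + 1) :
    Abelianization.of (rQ i) = Abelianization.of (rQ j) := by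
  have h1 := congrArg Abelianization.of (rQ_braid i j h)
  rw [map_mul, map_mul, map_mul, map_mul] at h1
  set x := Abelianization.of (rQ i)
  set y := Abelianization.of (rQ j)
  have e1 : x * y * x = x * (x * y) := by rw [mul_assoc, mul_comm y x]
  have e2 : y * x * y = x * (y * y) := by rw [mul_comm y x, mul_assoc]
  have h2 : x * (x * y) = x * (y * y) := by rw [← e1, ← e2]; exact h1
  exact mul_right_cancel (mul_left_cancel h2)

lemma ab_rQ_zero (hm : 4 ≤ m) :
    ∀ (k : ℕ) (hk : k < m), Abelianization.of (rQ ⟨k, hk⟩) = Abelianization.of (rQ ⟨0, by omega⟩) := by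
  intro k
  induction k with
  | zero => intro hk; rfl
  | succ k ih =>
    intro hk
    have hk' : k < m := by omega
    have h1 := ab_rQ_braid ⟨k, hk'⟩ ⟨k + 1, hk⟩ rfl
    rw [← h1]
    exact ih hk'

lemma ab_rQ_eq (hm : 4 ≤ m) (i j : Fin m) :
    Abelianization.of (rQ i) = Abelianization.of (rQ j) := by
  have hi := ab_rQ_zero hm i.val i.isLt
  have hj := ab_rQ_zero hm j.val j.isLt
  simp only [Fin.eta] at hi hj
  rw [hi, hj]

lemma rQ_mul_mem (hm : 4 ≤ m) (i j : Fin m) : rQ i * rQ j ∈ commutator (Qm m) := by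
  have h1 : Abelianization.of (rQ i * rQ j) = 1 := by
    rw [map_mul, ← ab_rQ_eq hm i j, ← map_mul, rQ_sq, map_one]
  exact (QuotientGroup.eq_one_iff (rQ i * rQ j)).mp h1

/-- Generic adjacent collapse, given a generator far from both. -/
lemma rQ_adj_far (hm : 4 ≤ m) (i j k : Fin m) (hij : (j : ℕ) = (i : ℕ) + 1)
    (hik : (i : ℕ) + 1 < (k : ℕ) ∨ (k : ℕ) + 1 < (i : ℕ))
    (hjk : (j : ℕ) + 1 < (k : ℕ) ∨ (k : ℕ) + 1 < (j : ℕ)) : rQ i = rQ j := by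
  refine key (rQ i) (rQ j) (rQ_sq i) (rQ_sq j) (rQ_braid i j hij) ?_
  refine far_key (rQ i) (rQ j) (rQ k) (rQ_sq j) (rQ_far i k hik) (rQ_far j k hjk) ?_
  exact comm_of_mem _ _ (rQ_mul_mem hm i j) (rQ_mul_mem hm j k)

lemma rQ_adj (hm : 4 ≤ m) (i : ℕ) (h : i + 1 < m) :
    rQ ⟨i, by omega⟩ = rQ ⟨i + 1, h⟩ := by
  by_cases hc : i + 4 ≤ m
  · exact rQ_adj_far hm ⟨i, by omega⟩ ⟨i + 1, h⟩ ⟨i + 3, by omega⟩ rfl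
      (Or.inl (show i + 1 < i + 3 by omega)) (Or.inl (show i + 1 + 1 < i + 3 by omega))
  · by_cases hc2 : 2 ≤ i
    · exact rQ_adj_far hm ⟨i, by omega⟩ ⟨i + 1, h⟩ ⟨i - 2, by omega⟩ rfl
        (Or.inr (show i - 2 + 1 < i by omega)) (Or.inr (show i - 2 + 1 < i + 1 by omega))
    · -- here m = 4 and i = 1
      have hi1 : i = 1 := by omega
      have hm4 : m = 4 := by omega
      subst hi1
      subst hm4
      have h01 : rQ (⟨0, by omega⟩ : Fin 4) = rQ ⟨1, by omega⟩ :=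
        rQ_adj_far hm ⟨0, by omega⟩ ⟨1, by omega⟩ ⟨3, by omega⟩ rfl
          (Or.inl (show (0 : ℕ) + 1 < 3 by omega)) (Or.inl (show (1 : ℕ) + 1 < 3 by omega))
      have h23 : rQ (⟨2, by omega⟩ : Fin 4) = rQ ⟨3, by omega⟩ :=
        rQ_adj_far hm ⟨2, by omega⟩ ⟨3, by omega⟩ ⟨0, by omega⟩ rfl
          (Or.inr (show (0 : ℕ) + 1 < 2 by omega)) (Or.inr (show (0 : ℕ) + 1 < 3 by omega))
      refine key _ _ (rQ_sq _) (rQ_sq _)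
        (rQ_braid (⟨1, by omega⟩ : Fin 4) ⟨2, by omega⟩ rfl) ?_
      rw [← h01, h23]
      exact rQ_far ⟨0, by omega⟩ ⟨3, by omega⟩ (Or.inl (show (0 : ℕ) + 1 < 3 by omega))

lemma rQ_all (hm : 4 ≤ m) (i j : Fin m) : rQ i = rQ j := by
  have hz : ∀ (k : ℕ) (hk : k < m), rQ ⟨k, hk⟩ = rQ ⟨0, by omega⟩ := by
    intro k
    induction k with
    | zero => intro hk; rfl
    | succ k ih =>
      intro hk
      have hk' : k < m := by omega
      rw [← rQ_adj hm k hk]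
      exact ih hk'
  have hi := hz i.val i.isLt
  have hj := hz j.val j.isLt
  simp only [Fin.eta] at hi hj
  rw [hi, hj]

lemma sQ_adj (hm : 4 ≤ m) (i j : Fin m) (h : (j : ℕ) = (i : ℕ) + 1) : sQ i = sQ j := by
  have h1 := rQ_mixed i j h
  rw [show rQ j = rQ i from rQ_all hm j i] at h1
  rw [rQ_sq i, one_mul] at h1
  rw [mul_assoc, rQ_sq i, mul_one] at h1
  exact h1

lemma sQ_all (hm : 4 ≤ m) (i j : Fin m) : sQ i = sQ j := by
  have hz : ∀ (k : ℕ) (hk : k < m), sQ ⟨k, hk⟩ = sQ ⟨0, by omega⟩ := by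
    intro k
    induction k with
    | zero => intro hk; rfl
    | succ k ih =>
      intro hk
      have hk' : k < m := by omega
      rw [← sQ_adj hm ⟨k, hk'⟩ ⟨k + 1, hk⟩ rfl]
      exact ih hk'
  have hi := hz i.val i.isLt
  have hj := hz j.val j.isLt
  simp only [Fin.eta] at hi hj
  rw [hi, hj]

lemma sQ_rQ_comm (hm : 4 ≤ m) (i j : Fin m) : sQ i * rQ j = rQ j * sQ i := by
  have h0 : (0 : ℕ) + 1 < 2 ∨ (2 : ℕ) + 1 < 0 := Or.inl (by omega)
  have h1 := sQ_rQ_far (⟨0, by omega⟩ : Fin m) (⟨2, by omega⟩ : Fin m) h0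
  rw [sQ_all hm i ⟨0, by omega⟩, rQ_all hm j ⟨2, by omega⟩]
  exact h1

lemma gen_comm (hm : 4 ≤ m) (g g' : WGen m) :
    Commute (ψm m (FreeGroup.of g)) (ψm m (FreeGroup.of g')) := by
  rcases g with i | i <;> rcases g' with j | j
  · show sQ i * sQ j = sQ j * sQ i
    rw [sQ_all hm i j]
  · exact sQ_rQ_comm hm i j
  · exact (sQ_rQ_comm hm j i).symm
  · show rQ i * rQ j = rQ j * rQ i
    rw [rQ_all hm i j]

lemma free_comm_aux (t : Qm m) (ht : ∀ g : WGen m, Commute (ψm m (FreeGroup.of g)) t) :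
    ∀ x : FreeGroup (WGen m), Commute (ψm m x) t := by
  intro x
  induction x using FreeGroup.induction_on with
  | C1 => rw [map_one]; exact Commute.one_left t
  | of g => exact ht g
  | inv_of g hg => rw [map_inv]; exact hg.inv_left
  | mul x y hx hy => rw [map_mul]; exact hx.mul_left hy

lemma free_comm (hm : 4 ≤ m) (x y : FreeGroup (WGen m)) :
    Commute (ψm m x) (ψm m y) := by
  refine free_comm_aux (ψm m y) (fun g => ?_) x
  exact ((free_comm_aux (ψm m (FreeGroup.of g)) (fun g' => gen_comm hm g' g) y).symm)

theorem aux (m : ℕ) (hm : 4 ≤ m) :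
    ⁅commutator (PresentedGroup (weldedRels m)), commutator (PresentedGroup (weldedRels m))⁆ =
      commutator (PresentedGroup (weldedRels m)) := by
  refine le_antisymm (Subgroup.commutator_mono le_top le_top) ?_
  rw [commutator_def]
  rw [Subgroup.commutator_le]
  intro g _ h _
  show ⁅g, h⁆ ∈ Km m
  rw [← QuotientGroup.ker_mk' (Km m), MonoidHom.mem_ker, map_commutatorElement]
  obtain ⟨x, rfl⟩ := PresentedGroup.mk_surjective (weldedRels m) g
  obtain ⟨y, rfl⟩ := PresentedGroup.mk_surjective (weldedRels m) h
  exact commutatorElement_eq_one_iff_commute.mpr (free_comm hm x y)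

end WBPerfectAux

/-- For $n ≥ 5$, the commutator subgroup of the welded braid group $WB_n$ is
perfect. -/
theorem commutator_WB_perfect (n : ℕ) (hn : 5 ≤ n) :
    ⁅commutator (WB n), commutator (WB n)⁆ = commutator (WB n) := by
  exact WBPerfectAux.aux (n - 1) (by omega)
end

section
/- For n ≥ 7, the commutator subgroup WB_n' of the welded braid group WB_n is generated by at most 2(n-3)+1 elements. -/
namespace WBAux

variable {m : ℕ}

open scoped commutatorElement

abbrev GG (m : ℕ) := PresentedGroup (weldedRels m)

/-- σ generator, ℕ-indexed. -/
noncomputable def σ (m : ℕ) (k : ℕ) : GG m :=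
  if h : k < m then PresentedGroup.of (Sum.inl (⟨k, h⟩ : Fin m)) else 1

noncomputable def ρ (m : ℕ) (k : ℕ) : GG m :=
  if h : k < m then PresentedGroup.of (Sum.inr (⟨k, h⟩ : Fin m)) else 1

lemma relator_one {x : FreeGroup (WGen m)} (hx : x ∈ weldedRels m) :
    PresentedGroup.mk (weldedRels m) x = 1 :=
  (QuotientGroup.eq_one_iff x).mpr (Subgroup.subset_normalClosure hx)

lemma mk_sg (i : Fin m) : PresentedGroup.mk (weldedRels m) (sg i) = σ m i.val := by
  simp only [σ, dif_pos i.isLt]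
  rfl

lemma mk_rg (i : Fin m) : PresentedGroup.mk (weldedRels m) (rg i) = ρ m i.val := by
  simp only [ρ, dif_pos i.isLt]
  rfl

section Rels

/-- far commutation σσ -/
lemma far_ss {i j : ℕ} (hi : i < m) (hj : j < m) (h : i + 1 < j ∨ j + 1 < i) :
    σ m i * σ m j = σ m j * σ m i := by
  have hmem : sg (⟨i, hi⟩ : Fin m) * sg ⟨j, hj⟩ * (sg ⟨i, hi⟩)⁻¹ * (sg ⟨j, hj⟩)⁻¹
      ∈ weldedRels m := by
    refine Set.mem_union_left _ (Set.mem_union_left _ ?_)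
    simp only [Set.mem_iUnion]
    exact ⟨⟨i, hi⟩, ⟨j, hj⟩, h, Set.mem_insert _ _⟩
  have h1 := relator_one hmem
  simp only [map_mul, map_inv, mk_sg] at h1
  have h2 : σ m i * σ m j * (σ m i)⁻¹ = σ m j := by
    rwa [mul_inv_eq_one] at h1
  rw [mul_inv_eq_iff_eq_mul] at h2
  exact h2

lemma far_rr {i j : ℕ} (hi : i < m) (hj : j < m) (h : i + 1 < j ∨ j + 1 < i) :
    ρ m i * ρ m j = ρ m j * ρ m i := by
  have hmem : rg (⟨i, hi⟩ : Fin m) * rg ⟨j, hj⟩ * (rg ⟨i, hi⟩)⁻¹ * (rg ⟨j, hj⟩)⁻¹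
      ∈ weldedRels m := by
    refine Set.mem_union_left _ (Set.mem_union_left _ ?_)
    simp only [Set.mem_iUnion]
    exact ⟨⟨i, hi⟩, ⟨j, hj⟩, h, Set.mem_insert_iff.mpr (Or.inr (Set.mem_insert _ _))⟩
  have h1 := relator_one hmem
  simp only [map_mul, map_inv, mk_rg] at h1
  have h2 : ρ m i * ρ m j * (ρ m i)⁻¹ = ρ m j := by rwa [mul_inv_eq_one] at h1
  rw [mul_inv_eq_iff_eq_mul] at h2
  exact h2

lemma far_sr {i j : ℕ} (hi : i < m) (hj : j < m) (h : i + 1 < j ∨ j + 1 < i) :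
    σ m i * ρ m j = ρ m j * σ m i := by
  have hmem : sg (⟨i, hi⟩ : Fin m) * rg ⟨j, hj⟩ * (sg ⟨i, hi⟩)⁻¹ * (rg ⟨j, hj⟩)⁻¹
      ∈ weldedRels m := by
    refine Set.mem_union_left _ (Set.mem_union_left _ ?_)
    simp only [Set.mem_iUnion]
    exact ⟨⟨i, hi⟩, ⟨j, hj⟩, h,
      Set.mem_insert_iff.mpr (Or.inr (Set.mem_insert_iff.mpr (Or.inr rfl)))⟩
  have h1 := relator_one hmem
  simp only [map_mul, map_inv, mk_sg, mk_rg] at h1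
  have h2 : σ m i * ρ m j * (σ m i)⁻¹ = ρ m j := by rwa [mul_inv_eq_one] at h1
  rw [mul_inv_eq_iff_eq_mul] at h2
  exact h2

lemma braid_ss {i : ℕ} (hi : i + 1 < m) :
    σ m i * σ m (i+1) * σ m i = σ m (i+1) * σ m i * σ m (i+1) := by
  have hmem : sg (⟨i, by omega⟩ : Fin m) * sg ⟨i+1, hi⟩ * sg ⟨i, by omega⟩ *
      (sg ⟨i+1, hi⟩ * sg ⟨i, by omega⟩ * sg ⟨i+1, hi⟩)⁻¹ ∈ weldedRels m := by
    refine Set.mem_union_left _ (Set.mem_union_right _ ?_)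
    simp only [Set.mem_iUnion]
    exact ⟨⟨i, by omega⟩, ⟨i+1, hi⟩, rfl, Set.mem_insert _ _⟩
  have h1 := relator_one hmem
  simp only [map_mul, map_inv, mk_sg] at h1
  rwa [mul_inv_eq_one] at h1

lemma braid_rr {i : ℕ} (hi : i + 1 < m) :
    ρ m i * ρ m (i+1) * ρ m i = ρ m (i+1) * ρ m i * ρ m (i+1) := by
  have hmem : rg (⟨i, by omega⟩ : Fin m) * rg ⟨i+1, hi⟩ * rg ⟨i, by omega⟩ *
      (rg ⟨i+1, hi⟩ * rg ⟨i, by omega⟩ * rg ⟨i+1, hi⟩)⁻¹ ∈ weldedRels m := by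
    refine Set.mem_union_left _ (Set.mem_union_right _ ?_)
    simp only [Set.mem_iUnion]
    exact ⟨⟨i, by omega⟩, ⟨i+1, hi⟩, rfl,
      Set.mem_insert_iff.mpr (Or.inr (Set.mem_insert _ _))⟩
  have h1 := relator_one hmem
  simp only [map_mul, map_inv, mk_rg] at h1
  rwa [mul_inv_eq_one] at h1

lemma mixed_rel {i : ℕ} (hi : i + 1 < m) :
    ρ m i * ρ m (i+1) * σ m i = σ m (i+1) * ρ m i * ρ m (i+1) := by
  have hmem : rg (⟨i, by omega⟩ : Fin m) * rg ⟨i+1, hi⟩ * sg ⟨i, by omega⟩ *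
      (sg ⟨i+1, hi⟩ * rg ⟨i, by omega⟩ * rg ⟨i+1, hi⟩)⁻¹ ∈ weldedRels m := by
    refine Set.mem_union_left _ (Set.mem_union_right _ ?_)
    simp only [Set.mem_iUnion]
    exact ⟨⟨i, by omega⟩, ⟨i+1, hi⟩, rfl,
      Set.mem_insert_iff.mpr (Or.inr (Set.mem_insert_iff.mpr (Or.inr (Set.mem_insert _ _))))⟩
  have h1 := relator_one hmem
  simp only [map_mul, map_inv, mk_sg, mk_rg] at h1
  rwa [mul_inv_eq_one] at h1

lemma rho_sq {k : ℕ} (hk : k < m) : ρ m k * ρ m k = 1 := by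
  have hmem : rg (⟨k, hk⟩ : Fin m) * rg ⟨k, hk⟩ ∈ weldedRels m := by
    refine Set.mem_union_right _ ?_
    simp only [Set.mem_iUnion]
    exact ⟨⟨k, hk⟩, rfl⟩
  have h1 := relator_one hmem
  simp only [map_mul, mk_rg] at h1
  exact h1

lemma rho_inv {k : ℕ} (hk : k < m) : (ρ m k)⁻¹ = ρ m k :=
  inv_eq_of_mul_eq_one_right (rho_sq hk)

end Rels



noncomputable def tt (m : ℕ) (k : ℕ) : GG m := σ m k * (σ m 0)⁻¹
noncomputable def qq (m : ℕ) (k : ℕ) : GG m := ρ m k * ρ m 0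
noncomputable def cc (m : ℕ) : GG m := σ m 0 * ρ m 0 * (σ m 0)⁻¹ * ρ m 0

theorem swp {G : Type*} [Group G] {a b : G} (h : Commute a b) (x : G) :
    a * (b * x) = b * (a * x) := by rw [← mul_assoc, h.eq, mul_assoc]

lemma comm_ss {i j : ℕ} (hi : i < m) (hj : j < m) (h : i + 1 < j ∨ j + 1 < i) :
    Commute (σ m i) (σ m j) := far_ss hi hj h

lemma comm_rr {i j : ℕ} (hi : i < m) (hj : j < m) (h : i + 1 < j ∨ j + 1 < i) :
    Commute (ρ m i) (ρ m j) := far_rr hi hj h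

lemma comm_sr {i j : ℕ} (hi : i < m) (hj : j < m) (h : i + 1 < j ∨ j + 1 < i) :
    Commute (σ m i) (ρ m j) := far_sr hi hj h

lemma rr_cancel {k : ℕ} (hk : k < m) (x : GG m) : ρ m k * (ρ m k * x) = x := by
  rw [← mul_assoc, rho_sq hk, one_mul]

/-- σ_{i+1} = ρ_i ρ_{i+1} σ_i ρ_{i+1} ρ_i -/
lemma mixed_subst {i : ℕ} (hi : i + 1 < m) :
    σ m (i+1) = ρ m i * (ρ m (i+1) * (σ m i * (ρ m (i+1) * ρ m i))) := by
  have h := mixed_rel hi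
  have h1 : i < m := by omega
  calc σ m (i+1) = (σ m (i+1) * ρ m i * ρ m (i+1)) * (ρ m i * ρ m (i+1))⁻¹ := by group
    _ = (ρ m i * ρ m (i+1) * σ m i) * (ρ m i * ρ m (i+1))⁻¹ := by rw [← h]
    _ = ρ m i * (ρ m (i+1) * (σ m i * ((ρ m (i+1))⁻¹ * (ρ m i)⁻¹))) := by group
    _ = _ := by rw [rho_inv hi, rho_inv h1]

lemma sigma_eq (k : ℕ) : σ m k = tt m k * σ m 0 := by unfold tt; group

lemma rho_eq {k : ℕ} (h0 : 0 < m) : ρ m k = qq m k * ρ m 0 := by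
  unfold qq; rw [mul_assoc, rho_sq h0, mul_one]


lemma braid_pad_s {i : ℕ} (hi : i + 1 < m) (x : GG m) :
    σ m i * (σ m (i+1) * (σ m i * x)) = σ m (i+1) * (σ m i * (σ m (i+1) * x)) := by
  calc σ m i * (σ m (i+1) * (σ m i * x)) = (σ m i * σ m (i+1) * σ m i) * x := by group
    _ = (σ m (i+1) * σ m i * σ m (i+1)) * x := by rw [braid_ss hi]
    _ = _ := by group

lemma braid_pad_r {i : ℕ} (hi : i + 1 < m) (x : GG m) :
    ρ m i * (ρ m (i+1) * (ρ m i * x)) = ρ m (i+1) * (ρ m i * (ρ m (i+1) * x)) := by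
  calc ρ m i * (ρ m (i+1) * (ρ m i * x)) = (ρ m i * ρ m (i+1) * ρ m i) * x := by group
    _ = (ρ m (i+1) * ρ m i * ρ m (i+1)) * x := by rw [braid_rr hi]
    _ = _ := by group

lemma iden1 (hm : 2 ≤ m) : tt m 1 = (qq m 1)⁻¹ * σ m 0 * (qq m 1) * (σ m 0)⁻¹ := by
  have h0 : (0:ℕ) < m := by omega
  have h1 : (1:ℕ) < m := by omega
  have hs1 : σ m 1 = ρ m 0 * (ρ m 1 * (σ m 0 * (ρ m 1 * ρ m 0))) := by
    simpa using mixed_subst (m := m) (i := 0) (by omega)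
  simp only [tt, qq, hs1, mul_inv_rev, rho_inv h0, rho_inv h1]
  group

lemma iden2 {i : ℕ} (h2 : 2 ≤ i) (hi : i + 1 < m) :
    tt m (i+1) = (qq m i * (qq m (i+1))⁻¹) * tt m i * (qq m i * (qq m (i+1))⁻¹)⁻¹ := by
  have h0 : (0:ℕ) < m := by omega
  have hii : i < m := by omega
  have hjj : i + 1 < m := hi
  simp only [tt, qq, mixed_subst hi, mul_inv_rev, inv_inv, rho_inv h0, rho_inv hii, rho_inv hjj]
  simp only [mul_assoc, rr_cancel h0,
    swp ((comm_sr h0 hii (Or.inl (by omega))).inv_left),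
    swp ((comm_sr h0 hjj (Or.inl (by omega))).inv_left),
    ((comm_sr h0 hii (Or.inl (by omega))).inv_left).eq,
    ((comm_sr h0 hjj (Or.inl (by omega))).inv_left).eq]

lemma iden3 (hm : 6 ≤ m) : cc m = (tt m 5)⁻¹ * (qq m 3)⁻¹ * tt m 5 * qq m 3 := by
  have h0 : (0:ℕ) < m := by omega
  have h3 : (3:ℕ) < m := by omega
  have h5 : (5:ℕ) < m := by omega
  simp only [tt, qq, cc, mul_inv_rev, inv_inv, rho_inv h0, rho_inv h3]
  simp only [mul_assoc, rr_cancel h0, rr_cancel h3, inv_mul_cancel_left,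
    swp ((comm_sr h5 h0 (Or.inr (by omega))).inv_left),
    swp ((comm_sr h5 h3 (Or.inr (by omega))).inv_left),
    swp ((comm_sr h0 h3 (Or.inl (by omega))).inv_left),
    ((comm_sr h5 h0 (Or.inr (by omega))).inv_left).eq,
    ((comm_sr h5 h3 (Or.inr (by omega))).inv_left).eq,
    ((comm_sr h0 h3 (Or.inl (by omega))).inv_left).eq]

lemma iden4 {k : ℕ} (hk : k < m) (h0 : 0 < m) :
    ρ m 0 * qq m k * ρ m 0 = (qq m k)⁻¹ := by
  simp only [qq, mul_inv_rev, rho_inv h0, rho_inv hk]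
  simp only [mul_assoc, rho_sq h0, mul_one]

lemma iden5 {k : ℕ} (h2 : 2 ≤ k) (hk : k < m) :
    ρ m 0 * tt m k * ρ m 0 = tt m k * cc m := by
  have h0 : (0:ℕ) < m := by omega
  simp only [tt, cc, mul_assoc, inv_mul_cancel_left,
    swp ((comm_sr hk h0 (Or.inr (by omega))).symm),
    ((comm_sr hk h0 (Or.inr (by omega))).symm).eq]

lemma iden6 {k : ℕ} (h2 : 2 ≤ k) (hk : k < m) :
    σ m 0 * qq m k * (σ m 0)⁻¹ = qq m k * (cc m)⁻¹ := by
  have h0 : (0:ℕ) < m := by omega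
  simp only [qq, cc, mul_inv_rev, inv_inv, rho_inv h0]
  simp only [mul_assoc, rr_cancel h0,
    swp (comm_sr h0 hk (Or.inl (by omega))),
    (comm_sr h0 hk (Or.inl (by omega))).eq]

lemma iden7 (hm : 4 ≤ m) :
    σ m 0 * qq m 1 * (σ m 0)⁻¹ = (tt m 3)⁻¹ * qq m 1 * tt m 3 := by
  have h0 : (0:ℕ) < m := by omega
  have h1 : (1:ℕ) < m := by omega
  have h3 : (3:ℕ) < m := by omega
  simp only [tt, qq, mul_inv_rev, inv_inv]
  simp only [mul_assoc, inv_mul_cancel_left,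
    swp ((comm_sr h3 h1 (Or.inr (by omega))).inv_left),
    swp ((comm_sr h3 h0 (Or.inr (by omega))).inv_left),
    ((comm_sr h3 h1 (Or.inr (by omega))).inv_left).eq,
    ((comm_sr h3 h0 (Or.inr (by omega))).inv_left).eq]

lemma iden8 (hm : 4 ≤ m) :
    (σ m 0)⁻¹ * qq m 1 * σ m 0 = tt m 3 * qq m 1 * (tt m 3)⁻¹ := by
  have h0 : (0:ℕ) < m := by omega
  have h1 : (1:ℕ) < m := by omega
  have h3 : (3:ℕ) < m := by omega
  simp only [tt, qq, mul_inv_rev, inv_inv]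
  simp only [mul_assoc, mul_inv_cancel_left, mul_inv_cancel, mul_one,
    swp ((comm_ss h0 h3 (Or.inl (by omega))).symm.inv_right),
    swp ((comm_ss h0 h3 (Or.inl (by omega))).symm),
    swp ((comm_sr h3 h1 (Or.inr (by omega)))),
    swp ((comm_sr h3 h0 (Or.inr (by omega)))),
    ((comm_ss h0 h3 (Or.inl (by omega))).symm.inv_right).eq,
    ((comm_ss h0 h3 (Or.inl (by omega))).symm).eq,
    ((comm_sr h3 h1 (Or.inr (by omega)))).eq,
    ((comm_sr h3 h0 (Or.inr (by omega)))).eq]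

lemma iden9a {k : ℕ} (h2 : 2 ≤ k) (hk : k < m) :
    σ m 0 * tt m k * (σ m 0)⁻¹ = tt m k := by
  have h0 : (0:ℕ) < m := by omega
  simp only [tt, mul_assoc, mul_inv_cancel_left, mul_inv_cancel, mul_one,
    swp (comm_ss h0 hk (Or.inl (by omega))),
    (comm_ss h0 hk (Or.inl (by omega))).eq]

lemma iden9b {k : ℕ} (h2 : 2 ≤ k) (hk : k < m) :
    (σ m 0)⁻¹ * tt m k * σ m 0 = tt m k := by
  have h0 : (0:ℕ) < m := by omega
  simp only [tt, mul_assoc, inv_mul_cancel, mul_one,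
    swp ((comm_ss h0 hk (Or.inl (by omega))).inv_left),
    ((comm_ss h0 hk (Or.inl (by omega))).inv_left).eq]

lemma iden10 (hm : 6 ≤ m) {k : ℕ} (h2 : 2 ≤ k) (hk : k < m) :
    (σ m 0)⁻¹ * qq m k * σ m 0 = qq m k * (tt m 5 * cc m * (tt m 5)⁻¹) := by
  have h0 : (0:ℕ) < m := by omega
  have h5 : (5:ℕ) < m := by omega
  simp only [tt, qq, cc, mul_inv_rev, inv_inv, rho_inv h0]
  simp only [mul_assoc, inv_mul_cancel_left, mul_inv_cancel_left, rr_cancel h0,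
    mul_inv_cancel, mul_one,
    swp ((comm_sr h0 hk (Or.inl (by omega))).inv_left),
    swp ((comm_sr h5 h0 (Or.inr (by omega)))),
    swp ((comm_ss h0 h5 (Or.inl (by omega))).symm),
    swp ((comm_ss h0 h5 (Or.inl (by omega))).symm.inv_right),
    ((comm_sr h0 hk (Or.inl (by omega))).inv_left).eq,
    ((comm_sr h5 h0 (Or.inr (by omega)))).eq,
    ((comm_ss h0 h5 (Or.inl (by omega))).symm).eq,
    ((comm_ss h0 h5 (Or.inl (by omega))).symm.inv_right).eq]

lemma iden11 (hm : 4 ≤ m) :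
    ρ m 0 * tt m 1 * ρ m 0
      = qq m 1 * (cc m)⁻¹ * (tt m 3)⁻¹ * (qq m 1)⁻¹ * tt m 3 * cc m := by
  have h0 : (0:ℕ) < m := by omega
  have h1 : (1:ℕ) < m := by omega
  have h3 : (3:ℕ) < m := by omega
  have hs1 : σ m 1 = ρ m 0 * (ρ m 1 * (σ m 0 * (ρ m 1 * ρ m 0))) := by
    simpa using mixed_subst (m := m) (i := 0) (by omega)
  simp only [tt, qq, cc, hs1, mul_inv_rev, inv_inv, rho_inv h0, rho_inv h1]
  simp only [mul_assoc, rr_cancel h0, inv_mul_cancel_left, mul_inv_cancel_left,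
    swp ((comm_sr h3 h0 (Or.inr (by omega))).inv_left),
    swp ((comm_sr h3 h1 (Or.inr (by omega))).inv_left),
    ((comm_sr h3 h0 (Or.inr (by omega))).inv_left).eq,
    ((comm_sr h3 h1 (Or.inr (by omega))).inv_left).eq]

lemma iden12a (hm : 4 ≤ m) :
    σ m 0 * tt m 1 * (σ m 0)⁻¹
      = (tt m 3)⁻¹ * (qq m 1)⁻¹ * (tt m 3)⁻¹ * qq m 1 * tt m 3 * tt m 3 := by
  have h0 : (0:ℕ) < m := by omega
  have h1 : (1:ℕ) < m := by omega
  have h3 : (3:ℕ) < m := by omega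
  have hs1 : σ m 1 = ρ m 0 * (ρ m 1 * (σ m 0 * (ρ m 1 * ρ m 0))) := by
    simpa using mixed_subst (m := m) (i := 0) (by omega)
  simp only [tt, qq, hs1, mul_inv_rev, inv_inv, rho_inv h0, rho_inv h1]
  simp only [mul_assoc, inv_mul_cancel_left, inv_mul_cancel, mul_one,
    swp ((comm_sr h3 h0 (Or.inr (by omega))).inv_left),
    swp ((comm_sr h3 h1 (Or.inr (by omega))).inv_left),
    swp ((comm_ss h0 h3 (Or.inl (by omega))).symm.inv_left),
    swp ((comm_ss h0 h3 (Or.inl (by omega))).symm.inv_left.inv_right),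
    ((comm_sr h3 h0 (Or.inr (by omega))).inv_left).eq,
    ((comm_sr h3 h1 (Or.inr (by omega))).inv_left).eq,
    ((comm_ss h0 h3 (Or.inl (by omega))).symm.inv_left).eq,
    ((comm_ss h0 h3 (Or.inl (by omega))).symm.inv_left.inv_right).eq]

lemma iden12b (hm : 4 ≤ m) :
    (σ m 0)⁻¹ * tt m 1 * σ m 0 = tt m 3 * (qq m 1)⁻¹ * (tt m 3)⁻¹ * qq m 1 := by
  have h0 : (0:ℕ) < m := by omega
  have h1 : (1:ℕ) < m := by omega
  have h3 : (3:ℕ) < m := by omega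
  have hs1 : σ m 1 = ρ m 0 * (ρ m 1 * (σ m 0 * (ρ m 1 * ρ m 0))) := by
    simpa using mixed_subst (m := m) (i := 0) (by omega)
  simp only [tt, qq, hs1, mul_inv_rev, inv_inv, rho_inv h0, rho_inv h1]
  simp only [mul_assoc, inv_mul_cancel_left, mul_inv_cancel_left, inv_mul_cancel,
    mul_inv_cancel, mul_one,
    swp ((comm_ss h0 h3 (Or.inl (by omega))).symm),
    swp ((comm_ss h0 h3 (Or.inl (by omega))).symm.inv_right),
    swp ((comm_sr h3 h0 (Or.inr (by omega)))),
    swp ((comm_sr h3 h1 (Or.inr (by omega)))),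
    ((comm_ss h0 h3 (Or.inl (by omega))).symm).eq,
    ((comm_ss h0 h3 (Or.inl (by omega))).symm.inv_right).eq,
    ((comm_sr h3 h0 (Or.inr (by omega)))).eq,
    ((comm_sr h3 h1 (Or.inr (by omega)))).eq]

lemma idenM2 (hm : 3 ≤ m) : tt m 2 = ⁅σ m 1 * σ m 2, σ m 1⁆ * tt m 1 := by
  have h2 : (1:ℕ) + 1 < m := by omega
  simp only [commutatorElement_def, tt, mul_inv_rev]
  simp only [mul_assoc]
  rw [show ((2:ℕ) = 1 + 1) from rfl, braid_pad_s h2]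
  simp only [mul_assoc, inv_mul_cancel_left, mul_inv_cancel_left]

lemma idenM3 {k : ℕ} (hk : k + 1 < m) :
    qq m (k+1) = ⁅ρ m k * ρ m (k+1), ρ m k⁆ * qq m k := by
  have hkk : k < m := by omega
  simp only [commutatorElement_def, qq, mul_inv_rev, rho_inv hkk, rho_inv hk]
  simp only [mul_assoc, rr_cancel hkk, rr_cancel hk]
  rw [braid_pad_r hk]
  simp only [mul_assoc, rr_cancel hkk, rr_cancel hk]


/-! ### The generating set and its closure -/

def genSet (m : ℕ) : Set (GG m) :=
  {tt m 1, tt m 2} ∪ Set.range (fun i : Fin m => qq m i.val)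

lemma mem_t1 : tt m 1 ∈ Subgroup.closure (genSet m) := by
  apply Subgroup.subset_closure; simp [genSet]

lemma mem_t2 : tt m 2 ∈ Subgroup.closure (genSet m) := by
  apply Subgroup.subset_closure; simp [genSet]

lemma mem_q {k : ℕ} (hk : k < m) : qq m k ∈ Subgroup.closure (genSet m) := by
  apply Subgroup.subset_closure
  simp only [genSet, Set.mem_union, Set.mem_range]
  exact Or.inr ⟨⟨k, hk⟩, rfl⟩

lemma tt_zero : tt m 0 = 1 := by simp [tt]

lemma qq_zero (h0 : 0 < m) : qq m 0 = 1 := rho_sq h0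

lemma mem_t (hm : 6 ≤ m) : ∀ k, k < m → tt m k ∈ Subgroup.closure (genSet m) := by
  intro k
  induction k with
  | zero => intro _; rw [tt_zero]; exact one_mem _
  | succ n ih =>
    intro hk
    rcases Nat.lt_or_ge n 2 with h | h
    · interval_cases n
      · exact mem_t1
      · exact mem_t2
    · rw [iden2 h hk]
      have h1 : qq m n * (qq m (n+1))⁻¹ ∈ Subgroup.closure (genSet m) :=
        mul_mem (mem_q (by omega)) (inv_mem (mem_q hk))
      exact mul_mem (mul_mem h1 (ih (by omega))) (inv_mem h1)

lemma mem_c (hm : 6 ≤ m) : cc m ∈ Subgroup.closure (genSet m) := by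
  rw [iden3 hm]
  exact mul_mem (mul_mem (mul_mem (inv_mem (mem_t hm 5 (by omega)))
    (inv_mem (mem_q (by omega)))) (mem_t hm 5 (by omega))) (mem_q (by omega))

theorem mem_normalizer_of_conj {G : Type*} [Group G] {T : Set G} {g : G}
    (h1 : ∀ s ∈ T, g * s * g⁻¹ ∈ Subgroup.closure T)
    (h2 : ∀ s ∈ T, g⁻¹ * s * g ∈ Subgroup.closure T) :
    g ∈ Subgroup.normalizer (Subgroup.closure T : Set G) := by
  have k1 : (Subgroup.closure T).map (MulAut.conj g).toMonoidHom ≤ Subgroup.closure T := by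
    rw [MonoidHom.map_closure]
    refine (Subgroup.closure_le _).mpr ?_
    rintro _ ⟨s, hs, rfl⟩
    simpa [MulAut.conj_apply, mul_assoc] using h1 s hs
  have k2 : (Subgroup.closure T).map (MulAut.conj g⁻¹).toMonoidHom ≤ Subgroup.closure T := by
    rw [MonoidHom.map_closure]
    refine (Subgroup.closure_le _).mpr ?_
    rintro _ ⟨s, hs, rfl⟩
    simpa [MulAut.conj_apply, mul_assoc] using h2 s hs
  rw [Subgroup.mem_normalizer_iff]
  intro x
  constructor
  · intro hx
    exact k1 (Subgroup.mem_map_of_mem _ hx)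
  · intro hx
    have hmem := k2 (Subgroup.mem_map_of_mem (MulAut.conj g⁻¹).toMonoidHom hx)
    have e : (MulAut.conj g⁻¹).toMonoidHom (g * x * g⁻¹) = x := by
      simp [MulAut.conj_apply]; group
    rwa [e] at hmem

lemma val_cases {i : Fin m} (h : i.val < 2) : i.val = 0 ∨ i.val = 1 := by omega

lemma sigma0_mem_normalizer (hm : 6 ≤ m) :
    σ m 0 ∈ Subgroup.normalizer (Subgroup.closure (genSet m) : Set (GG m)) := by
  have h0 : (0:ℕ) < m := by omega
  apply mem_normalizer_of_conj
  · intro s hs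
    simp only [genSet, Set.mem_union, Set.mem_insert_iff, Set.mem_singleton_iff,
      Set.mem_range] at hs
    rcases hs with (rfl | rfl) | ⟨i, rfl⟩
    · rw [iden12a (by omega)]
      exact mul_mem (mul_mem (mul_mem (mul_mem (mul_mem
        (inv_mem (mem_t hm 3 (by omega))) (inv_mem (mem_q (by omega))))
        (inv_mem (mem_t hm 3 (by omega)))) (mem_q (by omega)))
        (mem_t hm 3 (by omega))) (mem_t hm 3 (by omega))
    · rw [iden9a (by omega) (by omega)]
      exact mem_t2
    · rcases Nat.lt_or_ge i.val 2 with h | h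
      · rcases val_cases h with h | h
        · rw [h, qq_zero h0]
          simpa using one_mem (Subgroup.closure (genSet m))
        · rw [h, iden7 (by omega)]
          exact mul_mem (mul_mem (inv_mem (mem_t hm 3 (by omega)))
            (mem_q (by omega))) (mem_t hm 3 (by omega))
      · rw [iden6 h i.isLt]
        exact mul_mem (mem_q i.isLt) (inv_mem (mem_c hm))
  · intro s hs
    simp only [genSet, Set.mem_union, Set.mem_insert_iff, Set.mem_singleton_iff,
      Set.mem_range] at hs
    rcases hs with (rfl | rfl) | ⟨i, rfl⟩
    · rw [iden12b (by omega)]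
      exact mul_mem (mul_mem (mul_mem (mem_t hm 3 (by omega))
        (inv_mem (mem_q (by omega)))) (inv_mem (mem_t hm 3 (by omega))))
        (mem_q (by omega))
    · rw [iden9b (by omega) (by omega)]
      exact mem_t2
    · rcases Nat.lt_or_ge i.val 2 with h | h
      · rcases val_cases h with h | h
        · rw [h, qq_zero h0]
          simpa using one_mem (Subgroup.closure (genSet m))
        · rw [h, iden8 (by omega)]
          exact mul_mem (mul_mem (mem_t hm 3 (by omega)) (mem_q (by omega)))
            (inv_mem (mem_t hm 3 (by omega)))
      · rw [iden10 hm h i.isLt]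
        exact mul_mem (mem_q i.isLt)
          (mul_mem (mul_mem (mem_t hm 5 (by omega)) (mem_c hm))
            (inv_mem (mem_t hm 5 (by omega))))

lemma rho0_conj (hm : 6 ≤ m) :
    ∀ s ∈ genSet m, ρ m 0 * s * ρ m 0 ∈ Subgroup.closure (genSet m) := by
  have h0 : (0:ℕ) < m := by omega
  intro s hs
  simp only [genSet, Set.mem_union, Set.mem_insert_iff, Set.mem_singleton_iff,
    Set.mem_range] at hs
  rcases hs with (rfl | rfl) | ⟨i, rfl⟩
  · rw [iden11 (by omega)]
    exact mul_mem (mul_mem (mul_mem (mul_mem (mul_mem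
      (mem_q (by omega)) (inv_mem (mem_c hm))) (inv_mem (mem_t hm 3 (by omega))))
      (inv_mem (mem_q (by omega)))) (mem_t hm 3 (by omega))) (mem_c hm)
  · rw [iden5 (by omega) (by omega)]
    exact mul_mem mem_t2 (mem_c hm)
  · rw [iden4 i.isLt h0]
    exact inv_mem (mem_q i.isLt)

lemma rho0_mem_normalizer (hm : 6 ≤ m) :
    ρ m 0 ∈ Subgroup.normalizer (Subgroup.closure (genSet m) : Set (GG m)) := by
  have h0 : (0:ℕ) < m := by omega
  apply mem_normalizer_of_conj
  · intro s hs
    rw [rho_inv h0]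
    exact rho0_conj hm s hs
  · intro s hs
    rw [rho_inv h0]
    exact rho0_conj hm s hs

lemma of_inl (i : Fin m) : PresentedGroup.of (Sum.inl i) = σ m i.val := by
  rw [σ, dif_pos i.isLt, Fin.eta]

lemma of_inr (i : Fin m) : PresentedGroup.of (Sum.inr i) = ρ m i.val := by
  rw [ρ, dif_pos i.isLt, Fin.eta]

lemma H_normal (hm : 6 ≤ m) : (Subgroup.closure (genSet m)).Normal := by
  rw [← Subgroup.normalizer_eq_top_iff, eq_top_iff,
    ← PresentedGroup.closure_range_of (weldedRels m)]
  refine (Subgroup.closure_le _).mpr ?_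
  rintro _ ⟨z, rfl⟩
  rcases z with i | i
  · rw [of_inl, sigma_eq i.val]
    exact mul_mem (Subgroup.le_normalizer (mem_t hm i.val i.isLt))
      (sigma0_mem_normalizer hm)
  · rw [of_inr, rho_eq (show (0:ℕ) < m by omega)]
    exact mul_mem (Subgroup.le_normalizer (mem_q i.isLt))
      (rho0_mem_normalizer hm)

lemma genSet_subset_commutator (hm : 6 ≤ m) :
    genSet m ⊆ ↑(commutator (GG m)) := by
  have h0 : (0:ℕ) < m := by omega
  have hq : ∀ k, k < m → qq m k ∈ commutator (GG m) := by
    intro k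
    induction k with
    | zero => intro _; rw [qq_zero h0]; exact one_mem _
    | succ n ih =>
      intro hk
      rw [idenM3 hk, commutator_def]
      exact mul_mem (Subgroup.commutator_mem_commutator (Subgroup.mem_top _)
        (Subgroup.mem_top _)) (ih (by omega))
  have ht1 : tt m 1 ∈ commutator (GG m) := by
    have e : tt m 1 = ⁅(qq m 1)⁻¹, σ m 0⁆ := by
      rw [commutatorElement_def, inv_inv]; exact iden1 (by omega)
    rw [e, commutator_def]
    exact Subgroup.commutator_mem_commutator (Subgroup.mem_top _) (Subgroup.mem_top _)
  intro s hs
  simp only [genSet, Set.mem_union, Set.mem_insert_iff, Set.mem_singleton_iff,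
    Set.mem_range] at hs
  rcases hs with (rfl | rfl) | ⟨i, rfl⟩
  · exact ht1
  · rw [idenM2 (by omega)]
    refine mul_mem ?_ ht1
    rw [commutator_def]
    exact Subgroup.commutator_mem_commutator (Subgroup.mem_top _) (Subgroup.mem_top _)
  · exact hq i.val i.isLt

theorem closure_genSet (hm : 6 ≤ m) :
    Subgroup.closure (genSet m) = commutator (GG m) := by
  have h0 : (0:ℕ) < m := by omega
  refine le_antisymm ((Subgroup.closure_le _).mpr (genSet_subset_commutator hm)) ?_
  haveI hN : (Subgroup.closure (genSet m)).Normal := H_normal hm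
  rw [commutator_def]
  refine Subgroup.commutator_le.mpr ?_
  intro g₁ _ g₂ _
  set H := Subgroup.closure (genSet m) with hH
  set φ := QuotientGroup.mk' H with hφ
  have hkill_t : ∀ k, k < m → φ (tt m k) = 1 := fun k hk =>
    (QuotientGroup.eq_one_iff _).mpr (mem_t hm k hk)
  have hkill_q : ∀ k, k < m → φ (qq m k) = 1 := fun k hk =>
    (QuotientGroup.eq_one_iff _).mpr (mem_q hk)
  have hσk : ∀ i : Fin m, φ (PresentedGroup.of (Sum.inl i)) = φ (σ m 0) := by
    intro i
    rw [of_inl, sigma_eq i.val, map_mul, hkill_t i.val i.isLt, one_mul]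
  have hρk : ∀ i : Fin m, φ (PresentedGroup.of (Sum.inr i)) = φ (ρ m 0) := by
    intro i
    rw [of_inr, rho_eq h0, map_mul, hkill_q i.val i.isLt, one_mul]
  have hy2 : φ (ρ m 0) * φ (ρ m 0) = 1 := by rw [← map_mul, rho_sq h0, map_one]
  have hyinv : (φ (ρ m 0))⁻¹ = φ (ρ m 0) := inv_eq_of_mul_eq_one_right hy2
  have hxy : Commute (φ (σ m 0)) (φ (ρ m 0)) := by
    have h1 : φ (σ m 0) * φ (ρ m 0) * (φ (σ m 0))⁻¹ * φ (ρ m 0) = 1 := by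
      have hc := (QuotientGroup.eq_one_iff (cc m)).mpr (mem_c hm)
      rw [cc] at hc
      rw [← map_mul, ← map_inv, ← map_mul, ← map_mul]
      exact hc
    have h2 : φ (σ m 0) * φ (ρ m 0) * (φ (σ m 0))⁻¹ = (φ (ρ m 0))⁻¹ :=
      eq_inv_of_mul_eq_one_left h1
    rw [hyinv] at h2
    have h3 := mul_inv_eq_iff_eq_mul.mp h2
    exact h3
  have hgen : ∀ z : GG m ⧸ H, z ∈ Subgroup.closure {φ (σ m 0), φ (ρ m 0)} := by
    intro z
    obtain ⟨g, rfl⟩ := QuotientGroup.mk'_surjective H z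
    have hg : g ∈ Subgroup.closure
        (Set.range (PresentedGroup.of : WGen m → GG m)) := by
      rw [PresentedGroup.closure_range_of]; exact Subgroup.mem_top g
    have h2 : φ g ∈ (Subgroup.closure
        (Set.range (PresentedGroup.of : WGen m → GG m))).map φ :=
      Subgroup.mem_map_of_mem _ hg
    rw [MonoidHom.map_closure] at h2
    refine Subgroup.closure_mono ?_ h2
    rintro _ ⟨_, ⟨z0, rfl⟩, rfl⟩
    rcases z0 with i | i
    · rw [hσk i]; exact Set.mem_insert _ _
    · rw [hρk i]; exact Set.mem_insert_iff.mpr (Or.inr rfl)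
  have hcent : ∀ z : GG m ⧸ H,
      z ∈ Subgroup.centralizer {φ (σ m 0), φ (ρ m 0)} := by
    intro z
    refine (Subgroup.closure_le _).mpr ?_ (hgen z)
    rintro w hw
    simp only [SetLike.mem_coe, Subgroup.mem_centralizer_iff]
    rcases hw with rfl | hw
    · rintro h (rfl | hh)
      · rfl
      · rw [Set.mem_singleton_iff] at hh; subst hh
        exact hxy.symm.eq
    · rw [Set.mem_singleton_iff] at hw; subst hw
      rintro h (rfl | hh)
      · exact hxy.eq
      · rw [Set.mem_singleton_iff] at hh; subst hh; rfl
  have hcomm : ∀ a b : GG m ⧸ H, a * b = b * a := by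
    have hxc : φ (σ m 0) ∈ Subgroup.center (GG m ⧸ H) :=
      Subgroup.mem_center_iff.mpr fun g =>
        ((Subgroup.mem_centralizer_iff.mp (hcent g)) _ (Set.mem_insert _ _)).symm
    have hyc : φ (ρ m 0) ∈ Subgroup.center (GG m ⧸ H) :=
      Subgroup.mem_center_iff.mpr fun g =>
        ((Subgroup.mem_centralizer_iff.mp (hcent g)) _
          (Set.mem_insert_iff.mpr (Or.inr rfl))).symm
    have hall : ∀ a : GG m ⧸ H, a ∈ Subgroup.center (GG m ⧸ H) := by
      intro a
      refine (Subgroup.closure_le _).mpr ?_ (hgen a)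
      rintro w (rfl | hw)
      · exact hxc
      · rw [Set.mem_singleton_iff] at hw; subst hw; exact hyc
    intro a b
    exact Subgroup.mem_center_iff.mp (hall b) a
  have hfin : φ ⁅g₁, g₂⁆ = 1 := by
    rw [map_commutatorElement]
    exact commutatorElement_eq_one_iff_commute.mpr (hcomm _ _)
  exact (QuotientGroup.eq_one_iff _).mp hfin

end WBAux

/-- For $n ≥ 7$, the commutator subgroup of $WB_n$ is generated by at most
$2(n-3)+1$ elements. -/
theorem commutator_WB_rank (n : ℕ) (hn : 7 ≤ n) :
    ∃ S : Finset (WB n), S.card ≤ 2 * (n - 3) + 1 ∧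
      Subgroup.closure (S : Set (WB n)) = commutator (WB n) := by
  classical
  have hm : 6 ≤ n - 1 := by omega
  refine ⟨insert (WBAux.tt (n-1) 1) (insert (WBAux.tt (n-1) 2)
    (Finset.image (fun i : Fin (n-1) => WBAux.qq (n-1) i.val) Finset.univ)), ?_, ?_⟩
  · have h1 : (Finset.image (fun i : Fin (n-1) => WBAux.qq (n-1) i.val)
        Finset.univ).card ≤ n - 1 := by
      refine le_trans Finset.card_image_le ?_
      simp
    have h2 := Finset.card_insert_le (WBAux.tt (n-1) 2)
      (Finset.image (fun i : Fin (n-1) => WBAux.qq (n-1) i.val) Finset.univ)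
    have h3 := Finset.card_insert_le (WBAux.tt (n-1) 1)
      (insert (WBAux.tt (n-1) 2)
        (Finset.image (fun i : Fin (n-1) => WBAux.qq (n-1) i.val) Finset.univ))
    omega
  · have hset : ((insert (WBAux.tt (n-1) 1) (insert (WBAux.tt (n-1) 2)
        (Finset.image (fun i : Fin (n-1) => WBAux.qq (n-1) i.val) Finset.univ))
          : Finset (WB n)) : Set (WB n)) = WBAux.genSet (n-1) := by
      simp only [Finset.coe_insert, Finset.coe_image, Finset.coe_univ, Set.image_univ,
        WBAux.genSet]
      rw [Set.insert_union, Set.singleton_union]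
    rw [hset]
    exact WBAux.closure_genSet hm
end

section
/- Every finitely generated residually finite group is Hopfian. -/
lemma finite_homs (G H : Type) [Group G] [Group.FG G] [Group H] [Finite H] :
    Finite (G →* H) := by
  obtain ⟨S, hS⟩ := Group.FG.out (G := G)
  have : Function.Injective (fun φ : G →* H => fun s : S => φ s) := by
    intro φ ψ h
    apply MonoidHom.eq_of_eqOn_dense hS
    intro x hx
    exact congrFun h ⟨x, hx⟩
  exact Finite.of_injective _ this

/-- Every finitely generated residually finite group is Hopfian: if for every
nontrivial `g : G` there is a homomorphism to a finite group not killing `g`,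
then every surjective endomorphism of `G` is an isomorphism. -/
theorem fg_residuallyFinite_hopfian (G : Type) [Group G] [Group.FG G]
    (hres : ∀ g : G, g ≠ 1 → ∃ (H : Type) (_ : Group H) (_ : Finite H)
      (φ : G →* H), φ g ≠ 1)
    (f : G →* G) (hf : Function.Surjective f) : Function.Bijective f := by
  refine ⟨?_, hf⟩
  rw [← MonoidHom.ker_eq_bot_iff, Subgroup.eq_bot_iff_forall]
  intro g hg
  by_contra hg1
  obtain ⟨H, _, _, φ, hφ⟩ := hres g hg1
  have : Finite (G →* H) := finite_homs G H
  have hinj : Function.Injective (fun ψ : G →* H => ψ.comp f) := by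
    intro ψ1 ψ2 h
    ext x
    obtain ⟨y, rfl⟩ := hf x
    exact DFunLike.congr_fun h y
  obtain ⟨ψ, hψ⟩ := (Finite.injective_iff_surjective.mp hinj) φ
  have heq : φ g = ψ (f g) := by rw [← hψ]; rfl
  have hfg : f g = 1 := hg
  rw [heq, hfg, map_one] at hφ
  exact hφ rfl
end

section
/- The commutator subgroup of a free group of rank at least 2 is not finitely generated. -/
open SemidirectProduct Multiplicative Finsupp
open scoped commutatorElement

noncomputable abbrev LL.A : Type := Multiplicative (ℤ →₀ ℤ)

noncomputable def LL.σ : MulAut LL.A :=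
  AddEquiv.toMultiplicative (Finsupp.domCongr (Equiv.addRight (1 : ℤ)))

noncomputable def LL.φ : Multiplicative ℤ →* MulAut LL.A := zpowersHom _ LL.σ

noncomputable abbrev LL.W : Type := LL.A ⋊[LL.φ] Multiplicative ℤ

lemma LL.sigma_apply (k m : ℤ) :
    LL.σ (ofAdd (Finsupp.single k m)) = ofAdd (Finsupp.single (k + 1) m) := by
  show ofAdd (Finsupp.equivMapDomain (Equiv.addRight (1:ℤ)) (Finsupp.single k m)) = _
  rw [Finsupp.equivMapDomain_single, Equiv.coe_addRight]

lemma LL.sigma_inv_apply (k m : ℤ) :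
    LL.σ⁻¹ (ofAdd (Finsupp.single k m)) = ofAdd (Finsupp.single (k - 1) m) := by
  have h := LL.sigma_apply (k - 1) m
  rw [sub_add_cancel] at h
  rw [← h]
  exact MulAut.inv_apply_self _ _ _

lemma LL.sigma_pow (n : ℤ) (k : ℤ) (m : ℤ) :
    (LL.σ ^ n) (ofAdd (Finsupp.single k m)) = ofAdd (Finsupp.single (k + n) m) := by
  induction n using Int.induction_on generalizing k with
  | zero => simp
  | succ n ih =>
      rw [show ((n : ℤ) + 1) = 1 + n by ring, zpow_add, zpow_one, MulAut.mul_apply,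
        ih, LL.sigma_apply]
      congr 2
      ring
  | pred n ih =>
      rw [show (-(n : ℤ) - 1) = (-1) + (-n) by ring, zpow_add, MulAut.mul_apply,
        zpow_neg, zpow_one, ih, LL.sigma_inv_apply]
      congr 2
      ring

lemma LL.phi_apply (n : ℤ) (k m : ℤ) :
    LL.φ (ofAdd n) (ofAdd (Finsupp.single k m)) = ofAdd (Finsupp.single (k + n) m) := by
  show (LL.σ ^ (ofAdd n).toAdd) _ = _
  exact LL.sigma_pow n k m

/-- The commutator subgroup of a free group of rank at least `2` is not
finitely generated. -/
theorem commutator_freeGroup_not_fg (α : Type) (hα : Nontrivial α) :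
    ¬ (commutator (FreeGroup α)).FG := by
  classical
  intro hFG
  obtain ⟨a, b, hab⟩ := hα
  -- the homomorphism to the wreath product
  set t : LL.W := inr (ofAdd (1 : ℤ)) with ht
  set u : LL.W := inl (ofAdd (Finsupp.single (0:ℤ) (1:ℤ))) with hu
  set f : FreeGroup α →* LL.W :=
    FreeGroup.lift (fun x => if x = a then t else if x = b then u else 1) with hf
  have hfa : f (FreeGroup.of a) = t := by simp [hf]
  have hfb : f (FreeGroup.of b) = u := by simp [hf, hab.symm]
  set M : Subgroup LL.W := (commutator (FreeGroup α)).map f with hM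
  -- M is finitely generated
  obtain ⟨S0, hS0⟩ := hFG
  have hMfg : M = Subgroup.closure (↑(S0.image f) : Set LL.W) := by
    rw [Finset.coe_image, ← MonoidHom.map_closure, hS0]
  -- M is inside the base group
  have hMbase : M ≤ (inl : LL.A →* LL.W).range := by
    rw [range_inl_eq_ker_rightHom]
    rintro x ⟨y, hy, rfl⟩
    exact Abelianization.commutator_subset_ker (rightHom.comp f) hy
  -- generators lie in inl of a finite set P
  set S : Finset LL.W := S0.image f
  set P : Finset LL.A := S.image SemidirectProduct.left with hP
  have hSP : ∀ s ∈ S, s = inl s.left := by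
    intro s hs
    have hsM : s ∈ M := hMfg ▸ Subgroup.subset_closure (by exact_mod_cast hs)
    obtain ⟨p, hp⟩ := hMbase hsM
    rw [← hp]
    rfl
  have hMP : M = (Subgroup.closure (↑P : Set LL.A)).map inl := by
    rw [MonoidHom.map_closure, hMfg]
    congr 1
    ext x
    constructor
    · intro hx
      exact ⟨x.left, by simpa [hP] using Finset.mem_image_of_mem _ hx,
        (hSP x hx).symm⟩
    · rintro ⟨p, hp, rfl⟩
      simp only [hP, Finset.coe_image, Set.mem_image, Finset.mem_coe] at hp
      obtain ⟨s, hs, rfl⟩ := hp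
      rw [← hSP s hs]
      exact hs
  -- all elements of closure P have support inside T
  set T : Finset ℤ := P.sup (fun p => (Multiplicative.toAdd p).support) with hT
  have hsupp : ∀ q ∈ Subgroup.closure (↑P : Set LL.A),
      (Multiplicative.toAdd q).support ⊆ T := by
    intro q hq
    induction hq using Subgroup.closure_induction with
    | mem p hp =>
        intro i hi
        rw [hT]
        exact Finset.mem_sup.mpr ⟨p, by exact_mod_cast hp, hi⟩
    | one => simp
    | mul q r _ _ ihq ihr =>
        refine (Finsupp.support_add).trans ?_
        exact Finset.union_subset ihq ihr
    | inv q _ ihq => simpa using ihq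
  -- choose N outside T and nonzero
  obtain ⟨N, hN⟩ := Infinite.exists_notMem_finset (insert (0:ℤ) T)
  have hN0 : N ≠ 0 := fun h => hN (by simp [h])
  have hNT : N ∉ T := fun h => hN (Finset.mem_insert_of_mem h)
  -- the element ⁅a^N, b⁆ maps into M
  have hcomm : (⁅(FreeGroup.of a)^N, FreeGroup.of b⁆ : FreeGroup α) ∈
      commutator (FreeGroup α) := by
    rw [commutator_def]
    exact Subgroup.commutator_mem_commutator (Subgroup.mem_top _) (Subgroup.mem_top _)
  have hftN : f ((FreeGroup.of a)^N) = inr (ofAdd N) := by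
    rw [map_zpow, hfa, ht, ← map_zpow]
    congr 1
    rw [← ofAdd_zsmul]
    congr 1
    simp
  have hfval : f ⁅(FreeGroup.of a)^N, FreeGroup.of b⁆ =
      inl (ofAdd (Finsupp.single N 1 - Finsupp.single 0 1)) := by
    rw [map_commutatorElement, hftN, hfb, hu]
    have h1 : (inr (ofAdd N) : LL.W) * inl (ofAdd (Finsupp.single (0:ℤ) (1:ℤ))) *
        (inr (ofAdd N))⁻¹ = inl (LL.φ (ofAdd N) (ofAdd (Finsupp.single (0:ℤ) (1:ℤ)))) := by
      rw [← map_inv]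
      exact (inl_aut _ _).symm
    rw [commutatorElement_def, h1, ← map_inv, ← map_mul, LL.phi_apply, zero_add,
      ← ofAdd_neg, ← ofAdd_add, ← sub_eq_add_neg]
  -- derive the contradiction
  have hmem : f ⁅(FreeGroup.of a)^N, FreeGroup.of b⁆ ∈ M :=
    Subgroup.mem_map.mpr ⟨_, hcomm, rfl⟩
  rw [hMP] at hmem
  obtain ⟨q, hq, hq'⟩ := hmem
  rw [hfval] at hq'
  have hq'' : q = ofAdd (Finsupp.single N 1 - Finsupp.single 0 1) :=
    inl_injective hq'
  have hNsupp : N ∈ (Multiplicative.toAdd q).support := by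
    rw [hq'']
    rw [Finsupp.mem_support_iff, toAdd_ofAdd, Finsupp.sub_apply, Finsupp.single_eq_same,
      Finsupp.single_eq_of_ne hN0]
    norm_num
  exact hNT (hsupp q hq hNsupp)
end

section
/- The commutator subgroup of WB_2 is an infinitely generated free group. -/
noncomputable section
namespace WBtwo

open FreeGroup SemidirectProduct Multiplicative
open scoped commutatorElement

/-- membership characterization of the relators in the 2-strand case -/
lemma relsOne {M : Type*} [Group M] (f : WGen 1 → M)
    (h : f (Sum.inr 0) * f (Sum.inr 0) = 1) :
    ∀ r ∈ weldedRels 1, FreeGroup.lift f r = 1 := by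
  intro r hr
  rcases hr with (hr | hr) | hr
  · simp only [Set.mem_iUnion] at hr
    obtain ⟨i, j, hij, -⟩ := hr
    have hi := i.isLt; have hj := j.isLt; omega
  · simp only [Set.mem_iUnion] at hr
    obtain ⟨i, j, hij, -⟩ := hr
    have hi := i.isLt; have hj := j.isLt; omega
  · simp only [Set.mem_iUnion, Set.mem_singleton_iff] at hr
    obtain ⟨i, rfl⟩ := hr
    have : i = 0 := Subsingleton.elim _ _
    subst this
    simp [rg, h]

def σ' : WB 2 := PresentedGroup.of (Sum.inl 0)
def ρ' : WB 2 := PresentedGroup.of (Sum.inr 0)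

lemma rho_mem : (rg 0 * rg 0 : FreeGroup (WGen 1)) ∈ weldedRels 1 := by
  right
  simp only [Set.mem_iUnion, Set.mem_singleton_iff]
  exact ⟨0, rfl⟩

lemma rho_sq : ρ' * ρ' = 1 := by
  have : (QuotientGroup.mk (rg 0 * rg 0) : WB 2) = 1 := by
    rw [QuotientGroup.eq_one_iff]
    exact Subgroup.subset_normalClosure rho_mem
  exact this

lemma rho_inv : ρ'⁻¹ = ρ' := inv_eq_of_mul_eq_one_right rho_sq

/-- homomorphism from `Multiplicative (ZMod 2)` sending the generator to an element of
square one -/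
def homOfSq {M : Type*} [Group M] (m : M) (h : m * m = 1) : Multiplicative (ZMod 2) →* M :=
  AddMonoidHom.toMultiplicativeLeft
    (ZMod.lift 2 ⟨zmultiplesHom (Additive M) (Additive.ofMul m), by
      simp only [zmultiplesHom_apply]
      show ((2:ℤ) • Additive.ofMul m) = 0
      rw [two_zsmul, ← ofMul_mul, h, ofMul_one]⟩)

def z : Multiplicative (ZMod 2) := Multiplicative.ofAdd 1

@[simp] lemma homOfSq_z {M : Type*} [Group M] (m : M) (h : m * m = 1) :
    homOfSq m h z = m := by
  simp only [homOfSq, z, AddMonoidHom.coe_toMultiplicativeLeft, Function.comp_apply, toAdd_ofAdd]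
  have : ((1 : ZMod 2)) = ((1 : ℤ) : ZMod 2) := by norm_num
  rw [this, ZMod.lift_coe]
  simp


/-- the swap automorphism of the free group on two generators -/
def τ : MulAut (FreeGroup Bool) := FreeGroup.freeGroupCongr (Equiv.swap false true)

lemma tau_sq : τ * τ = 1 := by
  have hinv : τ⁻¹ = τ := by
    show (FreeGroup.freeGroupCongr (Equiv.swap false true)).symm = τ
    rw [FreeGroup.freeGroupCongr_symm, Equiv.symm_swap]
    rfl
  nth_rewrite 2 [← hinv]
  rw [mul_inv_cancel]

def φ : Multiplicative (ZMod 2) →* MulAut (FreeGroup Bool) := homOfSq τ tau_sq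

/-- the target group: free group on two generators semidirect `C2`. -/
abbrev Gt := FreeGroup Bool ⋊[φ] Multiplicative (ZMod 2)

lemma z_sq : z * z = 1 := by
  show Multiplicative.ofAdd (1 : ZMod 2) * Multiplicative.ofAdd 1 = 1
  rw [← ofAdd_add]
  decide

def fwd : WB 2 →* Gt :=
  PresentedGroup.toGroup (f := fun g => match g with
    | Sum.inl _ => inl (FreeGroup.of true)
    | Sum.inr _ => inr z)
  (relsOne _ (by show (inr z : Gt) * inr z = 1; rw [← _root_.map_mul, z_sq, _root_.map_one]))

@[simp] lemma fwd_σ : fwd σ' = inl (FreeGroup.of true) := PresentedGroup.toGroup.of _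
@[simp] lemma fwd_ρ : fwd ρ' = inr z := PresentedGroup.toGroup.of _

def gN : FreeGroup Bool →* WB 2 :=
  FreeGroup.lift (fun b => if b then σ' else ρ' * σ' * ρ')

def gH : Multiplicative (ZMod 2) →* WB 2 := homOfSq ρ' rho_sq

lemma zmod2_cases (x : Multiplicative (ZMod 2)) : x = 1 ∨ x = z := by
  have : ∀ y : ZMod 2, y = 0 ∨ y = 1 := by decide
  rcases this (Multiplicative.toAdd x) with h | h
  · left; exact (ofAdd_toAdd x).symm.trans (by rw [h]; rfl)
  · right; exact (ofAdd_toAdd x).symm.trans (by rw [h]; rfl)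

@[simp] lemma φ_z : φ z = τ := homOfSq_z _ _

lemma gcompat : ∀ h : Multiplicative (ZMod 2),
    gN.comp (φ h).toMonoidHom = (MulAut.conj (gH h)).toMonoidHom.comp gN := by
  intro h
  rcases zmod2_cases h with rfl | rfl
  · refine FreeGroup.ext_hom _ _ ?_
    intro a
    simp [map_one]
  · refine FreeGroup.ext_hom _ _ ?_
    intro a
    have hz : gH z = ρ' := homOfSq_z _ _
    cases a <;>
      simp [gN, τ, hz, MulAut.conj, rho_inv, mul_assoc, rho_sq] <;>
      group <;> simp [rho_sq, rho_inv]

def bwd : Gt →* WB 2 := SemidirectProduct.lift gN gH gcompat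

lemma bwd_fwd : bwd.comp fwd = MonoidHom.id _ := by
  refine PresentedGroup.ext ?_
  intro x
  match x with
  | Sum.inl i =>
    have : i = 0 := by
      have h1 := i.isLt
      exact Fin.ext (by omega)
    subst this
    show bwd (fwd σ') = σ'
    simp [fwd_σ, bwd, gN]
  | Sum.inr i =>
    have : i = 0 := by
      have h1 := i.isLt
      exact Fin.ext (by omega)
    subst this
    show bwd (fwd ρ') = ρ'
    simp only [fwd_ρ, bwd, SemidirectProduct.lift_inr]
    exact homOfSq_z _ _

lemma z_inv : z⁻¹ = z := inv_eq_of_mul_eq_one_right z_sq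

lemma fwd_rho_sigma_rho : fwd (ρ' * σ' * ρ') = inl (FreeGroup.of false) := by
  have h := SemidirectProduct.inl_aut (φ := φ) z (FreeGroup.of true)
  rw [φ_z] at h
  have hτ : τ (FreeGroup.of true) = FreeGroup.of false := by
    simp [τ]
  rw [hτ, z_inv] at h
  simp only [_root_.map_mul, fwd_σ, fwd_ρ]
  rw [h]

lemma fwd_bwd : fwd.comp bwd = MonoidHom.id _ := by
  refine SemidirectProduct.hom_ext ?_ ?_
  · refine FreeGroup.ext_hom _ _ ?_
    intro a
    cases a
    · show fwd (bwd (inl (FreeGroup.of false))) = inl (FreeGroup.of false)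
      rw [bwd, SemidirectProduct.lift_inl]
      show fwd (gN (FreeGroup.of false)) = _
      rw [gN, FreeGroup.lift_apply_of]
      simpa using fwd_rho_sigma_rho
    · show fwd (bwd (inl (FreeGroup.of true))) = inl (FreeGroup.of true)
      rw [bwd, SemidirectProduct.lift_inl]
      show fwd (gN (FreeGroup.of true)) = _
      rw [gN, FreeGroup.lift_apply_of]
      simp
  · refine MonoidHom.ext ?_
    intro h
    rcases zmod2_cases h with rfl | rfl
    · show fwd (bwd (inr 1)) = inr 1
      rw [_root_.map_one, _root_.map_one, _root_.map_one]
    · show fwd (bwd (inr z)) = inr z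
      rw [bwd, SemidirectProduct.lift_inr]
      show fwd (gH z) = _
      rw [show gH z = ρ' from homOfSq_z _ _]
      simp

def Θ : WB 2 ≃* Gt := MonoidHom.toMulEquiv fwd bwd bwd_fwd fwd_bwd

/-- projection to `C2` -/
def ψ : WB 2 →* Multiplicative (ZMod 2) := rightHom.comp fwd

/-- the kernel of the projection, an index-2 free subgroup -/
def K : Subgroup (WB 2) := ψ.ker

lemma theta_coe : (Θ : WB 2 →* Gt) = fwd := rfl

lemma K_map : K.map (Θ : WB 2 →* Gt) = (inl : FreeGroup Bool →* Gt).range := by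
  rw [SemidirectProduct.range_inl_eq_ker_rightHom]
  have h1 : K = Subgroup.comap (Θ : WB 2 →* Gt) (MonoidHom.ker rightHom) := by
    rw [theta_coe]
    exact (MonoidHom.comap_ker _ _).symm
  rw [h1]
  exact Subgroup.map_comap_eq_self_of_surjective Θ.surjective _

/-- identification of the kernel with the free group on two letters -/
def isoK : K ≃* FreeGroup Bool :=
  ((Θ.subgroupMap K).trans (MulEquiv.subgroupCongr K_map)).trans
    (MonoidHom.ofInjective SemidirectProduct.inl_injective).symm

lemma inl_isoK (x : K) : inl (isoK x) = fwd (x : WB 2) := by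
  show (inl : FreeGroup Bool →* Gt)
      ((MonoidHom.ofInjective SemidirectProduct.inl_injective).symm
        (MulEquiv.subgroupCongr K_map ((Θ.subgroupMap K) x))) = fwd (x : WB 2)
  rw [MonoidHom.apply_ofInjective_symm]
  rw [MulEquiv.subgroupCongr_apply, MulEquiv.coe_subgroupMap_apply]
  rfl

lemma isoK_eq (x : K) (w : FreeGroup Bool) (h : fwd (x : WB 2) = inl w) : isoK x = w := by
  apply SemidirectProduct.inl_injective (φ := φ)
  rw [inl_isoK, h]

instance : IsFreeGroup K := IsFreeGroup.ofMulEquiv (G := FreeGroup Bool) (H := ↥K) isoK.symm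

lemma comm_le_K : commutator (WB 2) ≤ K := Abelianization.commutator_subset_ker ψ

/-- the commutator subgroup as a subgroup of `K` -/
def C' : Subgroup K := (commutator (WB 2)).subgroupOf K

def commIso : ↥(commutator (WB 2)) ≃* FreeGroup (IsFreeGroup.Generators C') :=
  (Subgroup.subgroupOfEquivOfLe comm_le_K).symm.trans (IsFreeGroup.toFreeGroup C')

/-! ### The lamplighter group and the non-finite-generation argument -/

abbrev Lamp := ℤ →₀ ℤ

/-- shift action of `ℤ` on finitely supported functions `ℤ →₀ ℤ` -/
def sh : Multiplicative ℤ →* MulAut (Multiplicative Lamp) :=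
  MonoidHom.mk' (fun t => AddEquiv.toMultiplicative
      (Finsupp.domCongr (Equiv.addRight (Multiplicative.toAdd t)))) (by
    intro a b
    refine MulEquiv.ext (fun x => ?_)
    show Multiplicative.ofAdd (Finsupp.equivMapDomain (Equiv.addRight (Multiplicative.toAdd (a*b)))
        (Multiplicative.toAdd x)) = _
    rw [MulAut.mul_apply]
    show _ = Multiplicative.ofAdd (Finsupp.equivMapDomain (Equiv.addRight (Multiplicative.toAdd a))
        (Finsupp.equivMapDomain (Equiv.addRight (Multiplicative.toAdd b)) (Multiplicative.toAdd x)))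
    congr 1
    ext i
    simp only [Finsupp.equivMapDomain_apply, Equiv.addRight_symm_apply, toAdd_mul]
    congr 1
    ring)

/-- the lamplighter group `(ℤ →₀ ℤ) ⋊ ℤ` -/
abbrev M := Multiplicative Lamp ⋊[sh] Multiplicative ℤ

lemma inr_mul_inl (t : Multiplicative ℤ) (m : Multiplicative Lamp) :
    (inr t : M) * inl m = inl (sh t m) * inr t := by
  rw [SemidirectProduct.inl_aut]
  simp [mul_assoc, ← _root_.map_mul]

/-- the lamplighter homomorphism -/
def Λ : FreeGroup Bool →* M :=
  FreeGroup.lift (fun b => if b then inl (Multiplicative.ofAdd (Finsupp.single (0:ℤ) (1:ℤ)))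
      * inr (Multiplicative.ofAdd (1:ℤ)) else inr (Multiplicative.ofAdd (1:ℤ)))

/-- total exponent homomorphism on the free group -/
def expo : FreeGroup Bool →* Multiplicative ℤ :=
  FreeGroup.lift (fun _ => Multiplicative.ofAdd (1:ℤ))

lemma rightHom_Λ : (rightHom : M →* Multiplicative ℤ).comp Λ = expo := by
  refine FreeGroup.ext_hom _ _ ?_
  intro a
  cases a <;> simp [Λ, expo]

/-- total σ-exponent on `WB 2` -/
def lam : WB 2 →* Multiplicative ℤ :=
  PresentedGroup.toGroup (f := fun g => match g with
    | Sum.inl _ => Multiplicative.ofAdd (1:ℤ)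
    | Sum.inr _ => 1)
  (relsOne _ (by simp))

@[simp] lemma lam_σ : lam σ' = Multiplicative.ofAdd (1:ℤ) := PresentedGroup.toGroup.of _
@[simp] lemma lam_ρ : lam ρ' = 1 := PresentedGroup.toGroup.of _

lemma isoK_symm_coe (b : Bool) :
    ((isoK.symm (FreeGroup.of b) : K) : WB 2) = if b then σ' else ρ' * σ' * ρ' := by
  have h1 : inl (isoK (isoK.symm (FreeGroup.of b))) = fwd ((isoK.symm (FreeGroup.of b) : K) : WB 2) :=
    inl_isoK _
  rw [MulEquiv.apply_symm_apply] at h1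
  have h2 := congrArg bwd h1
  have h3 : bwd (fwd ((isoK.symm (FreeGroup.of b) : K) : WB 2))
      = ((isoK.symm (FreeGroup.of b) : K) : WB 2) :=
    congrFun (congrArg (fun (f : WB 2 →* WB 2) => ⇑f) bwd_fwd) _
  rw [h3] at h2
  rw [← h2, bwd, SemidirectProduct.lift_inl]
  cases b <;> simp [gN]

lemma expo_isoK (x : K) : expo (isoK x) = lam (x : WB 2) := by
  have E1 : (lam.comp K.subtype).comp isoK.symm.toMonoidHom = expo := by
    refine FreeGroup.ext_hom _ _ ?_
    intro b
    have := isoK_symm_coe b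
    cases b <;>
      simp_all [expo]
  have := congrFun (congrArg (fun (f : FreeGroup Bool →* Multiplicative ℤ) => ⇑f) E1) (isoK x)
  simp only [MonoidHom.comp_apply, MulEquiv.coe_toMonoidHom, MulEquiv.symm_apply_apply] at this
  rw [← this]
  rfl

/-- the witness commutators -/
def c (n : ℕ) : WB 2 := ⁅σ' ^ n, ρ' * σ' * ρ'⁆

lemma c_mem (n : ℕ) : c n ∈ commutator (WB 2) := by
  rw [commutator_def]
  exact Subgroup.commutator_mem_commutator (Subgroup.mem_top _) (Subgroup.mem_top _)

def wn (n : ℕ) : FreeGroup Bool := ⁅(FreeGroup.of true) ^ n, FreeGroup.of false⁆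

lemma fwd_c (n : ℕ) : fwd (c n) = inl (wn n) := by
  rw [c, map_commutatorElement, map_pow, fwd_σ, fwd_rho_sigma_rho, wn, ← map_pow,
    ← map_commutatorElement]

/-- partial sums of delta functions -/
def Sl (n : ℕ) : Lamp := ∑ i ∈ Finset.range n, Finsupp.single (i : ℤ) (1:ℤ)

lemma lam_pow (n : ℕ) : Λ ((FreeGroup.of true) ^ n)
    = inl (Multiplicative.ofAdd (Sl n)) * inr (Multiplicative.ofAdd (n:ℤ)) := by
  induction n with
  | zero => simp [Sl]
  | succ n ih =>
    rw [pow_succ, _root_.map_mul, ih]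
    have hX : Λ (FreeGroup.of true) = inl (Multiplicative.ofAdd (Finsupp.single (0:ℤ) (1:ℤ)))
        * inr (Multiplicative.ofAdd (1:ℤ)) := by simp [Λ]
    rw [hX]
    have hmid : (inr (Multiplicative.ofAdd (n:ℤ)) : M)
        * inl (Multiplicative.ofAdd (Finsupp.single (0:ℤ) (1:ℤ)))
        = inl (Multiplicative.ofAdd (Finsupp.single ((n:ℤ)) (1:ℤ)))
          * inr (Multiplicative.ofAdd (n:ℤ)) := by
      rw [inr_mul_inl]
      congr 2
      show Multiplicative.ofAdd (Finsupp.equivMapDomain (Equiv.addRight ((n:ℤ)))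
          (Finsupp.single (0:ℤ) (1:ℤ))) = _
      rw [Finsupp.equivMapDomain_single]
      simp
    calc inl (Multiplicative.ofAdd (Sl n)) * inr (Multiplicative.ofAdd (n:ℤ))
        * (inl (Multiplicative.ofAdd (Finsupp.single (0:ℤ) (1:ℤ)))
          * inr (Multiplicative.ofAdd (1:ℤ)))
        = inl (Multiplicative.ofAdd (Sl n))
          * (inr (Multiplicative.ofAdd (n:ℤ)) * inl (Multiplicative.ofAdd (Finsupp.single (0:ℤ) (1:ℤ))))
          * inr (Multiplicative.ofAdd (1:ℤ)) := by group
      _ = inl (Multiplicative.ofAdd (Sl n))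
          * (inl (Multiplicative.ofAdd (Finsupp.single ((n:ℤ)) (1:ℤ)))
            * inr (Multiplicative.ofAdd (n:ℤ)))
          * inr (Multiplicative.ofAdd (1:ℤ)) := by rw [hmid]
      _ = inl (Multiplicative.ofAdd (Sl (n+1))) * inr (Multiplicative.ofAdd ((n:ℤ)+1)) := by
          rw [← mul_assoc, ← _root_.map_mul (inl : Multiplicative Lamp →* M),
            mul_assoc, ← _root_.map_mul (inr : Multiplicative ℤ →* M), ← ofAdd_add, ← ofAdd_add]
          congr 2
          · rw [show Sl (n+1) = Sl n + Finsupp.single ((n:ℕ):ℤ) 1 from Finset.sum_range_succ _ n]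
      _ = _ := by norm_num

@[simp] lemma sh_eval (t : Multiplicative ℤ) (x : Multiplicative Lamp) (i : ℤ) :
    Multiplicative.toAdd ((sh t) x) i = Multiplicative.toAdd x (i - Multiplicative.toAdd t) := by
  show Finsupp.equivMapDomain (Equiv.addRight (Multiplicative.toAdd t)) (Multiplicative.toAdd x) i
      = _
  rw [Finsupp.equivMapDomain_apply]
  simp [sub_eq_add_neg]

@[simp] lemma sh_apply (t : Multiplicative ℤ) (l : Lamp) :
    sh t (Multiplicative.ofAdd l) = Multiplicative.ofAdd
      (Finsupp.equivMapDomain (Equiv.addRight (Multiplicative.toAdd t)) l) := rfl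

lemma lam_wn (n : ℕ) : Λ (wn n) = inl (Multiplicative.ofAdd
    (Sl n - Finsupp.equivMapDomain (Equiv.addRight (1:ℤ)) (Sl n))) := by
  have hY : Λ (FreeGroup.of false) = inr (Multiplicative.ofAdd (1:ℤ)) := by simp [Λ]
  rw [wn, commutatorElement_def, _root_.map_mul, _root_.map_mul, _root_.map_mul, _root_.map_inv,
    _root_.map_inv, lam_pow, hY]
  ext : 1
  · simp only [SemidirectProduct.mul_left, SemidirectProduct.mul_right,
      SemidirectProduct.inv_left, SemidirectProduct.inv_right, SemidirectProduct.left_inl,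
      SemidirectProduct.right_inl, SemidirectProduct.left_inr, SemidirectProduct.right_inr,
      _root_.map_mul, _root_.map_inv, map_one, mul_one, one_mul, mul_inv_rev, inv_inv]
    apply Multiplicative.toAdd.injective
    ext i
    simp only [← _root_.map_inv sh, ← _root_.map_mul sh,
      toAdd_mul, toAdd_inv, toAdd_ofAdd, sh_eval, toAdd_one, Finsupp.add_apply,
      Finsupp.neg_apply, Finsupp.sub_apply, Finsupp.coe_zero, Pi.zero_apply,
      Finsupp.equivMapDomain_apply, Equiv.addRight_symm_apply, sub_zero, add_zero, zero_add,
      neg_zero, neg_neg, zero_sub, sub_self]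
    rw [show i - ((n:ℤ) + 1) - -(n:ℤ) = i + -1 by ring, sub_eq_add_neg]
  · simp only [SemidirectProduct.mul_left, SemidirectProduct.mul_right,
      SemidirectProduct.inv_left, SemidirectProduct.inv_right, SemidirectProduct.left_inl,
      SemidirectProduct.right_inl, SemidirectProduct.left_inr, SemidirectProduct.right_inr,
      _root_.map_mul, _root_.map_inv, _root_.map_one, mul_one, one_mul]
    rw [← ofAdd_neg, ← ofAdd_neg, ← ofAdd_add, ← ofAdd_add, ← ofAdd_add]
    norm_num

lemma Sl_apply_self (n : ℕ) : Sl n ((n:ℤ)) = 0 := by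
  rw [Sl, Finsupp.finset_sum_apply]
  refine Finset.sum_eq_zero ?_
  intro i hi
  rw [Finsupp.single_apply]
  rw [Finset.mem_range] at hi
  rw [if_neg (by omega)]

lemma Sl_apply_pred (n : ℕ) (hn : 1 ≤ n) : Sl n ((n:ℤ) - 1) = 1 := by
  obtain ⟨m, rfl⟩ : ∃ m, n = m + 1 := ⟨n - 1, by omega⟩
  rw [Sl, Finsupp.finset_sum_apply]
  rw [Finset.sum_eq_single m]
  · rw [Finsupp.single_apply, if_pos (by push_cast; ring)]
  · intro i hi hne
    rw [Finsupp.single_apply, if_neg (by rw [Finset.mem_range] at hi; omega)]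
  · intro h
    exact absurd (Finset.self_mem_range_succ m) h

/-- the subgroup of the lamplighter group consisting of lamp configurations supported
in a fixed finite set -/
def P (F : Finset ℤ) : Subgroup M where
  carrier := {m | m.right = 1 ∧ ∀ i : ℤ, Multiplicative.toAdd m.left i ≠ 0 → i ∈ F}
  one_mem' := by
    refine ⟨rfl, ?_⟩
    intro i hi
    simp at hi
  mul_mem' := by
    rintro a b ⟨ha1, ha2⟩ ⟨hb1, hb2⟩
    refine ⟨?_, ?_⟩
    · show (a*b).right = 1
      rw [SemidirectProduct.mul_right, ha1, hb1, mul_one]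
    · intro i hi
      rw [SemidirectProduct.mul_left, ha1, _root_.map_one] at hi
      simp only [MulAut.one_apply, toAdd_mul, Finsupp.add_apply] at hi
      by_contra hiF
      have h1 : Multiplicative.toAdd a.left i = 0 := by
        by_contra h; exact hiF (ha2 i h)
      have h2 : Multiplicative.toAdd b.left i = 0 := by
        by_contra h; exact hiF (hb2 i h)
      rw [h1, h2] at hi
      simp at hi
  inv_mem' := by
    rintro a ⟨ha1, ha2⟩
    refine ⟨?_, ?_⟩
    · show a⁻¹.right = 1
      rw [SemidirectProduct.inv_right, ha1, inv_one]
    · intro i hi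
      rw [SemidirectProduct.inv_left, ha1, inv_one, _root_.map_one] at hi
      simp only [MulAut.one_apply, toAdd_inv, Finsupp.neg_apply, ne_eq, neg_eq_zero] at hi
      exact ha2 i hi

lemma mem_P {F : Finset ℤ} {m : M} :
    m ∈ P F ↔ m.right = 1 ∧ ∀ i : ℤ, Multiplicative.toAdd m.left i ≠ 0 → i ∈ F := Iff.rfl

theorem not_fg : ¬ (commutator (WB 2)).FG := by
  rintro ⟨Sf, hSf⟩
  have hsub : ∀ s ∈ Sf, s ∈ commutator (WB 2) := fun s hs => hSf ▸ Subgroup.subset_closure hs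
  classical
  let emb : {x // x ∈ Sf} → K := fun s => ⟨s.1, comm_le_K (hsub s.1 s.2)⟩
  let F : Finset ℤ :=
    Sf.attach.biUnion (fun s => (Multiplicative.toAdd ((Λ (isoK (emb s))).left)).support)
  have hC' : Subgroup.closure (Set.range emb) = (commutator (WB 2)).subgroupOf K := by
    apply Subgroup.map_injective K.subtype_injective
    rw [MonoidHom.map_closure, Subgroup.subgroupOf_map_subtype]
    have himg : (K.subtype '' Set.range emb) = ↑Sf := by
      ext x
      constructor
      · rintro ⟨y, ⟨s, rfl⟩, rfl⟩
        exact s.2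
      · intro hx
        exact ⟨emb ⟨x, hx⟩, ⟨⟨x, hx⟩, rfl⟩, rfl⟩
    rw [himg, hSf, inf_eq_left.mpr comm_le_K]
  have hkey : ∀ x : K, x ∈ (commutator (WB 2)).subgroupOf K → Λ (isoK x) ∈ P F := by
    intro x hx
    rw [← hC'] at hx
    have hle : Subgroup.closure (Set.range emb)
        ≤ (P F).comap (Λ.comp isoK.toMonoidHom) := by
      rw [Subgroup.closure_le]
      rintro y ⟨s, rfl⟩
      show Λ (isoK (emb s)) ∈ P F
      rw [mem_P]
      constructor
      · have h1 : rightHom (Λ (isoK (emb s))) = expo (isoK (emb s)) :=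
          congrFun (congrArg (fun (f : FreeGroup Bool →* Multiplicative ℤ) => ⇑f) rightHom_Λ) _
        have h2 : expo (isoK (emb s)) = lam ((emb s : K) : WB 2) := expo_isoK _
        have h3 : lam ((emb s : K) : WB 2) = 1 :=
          Abelianization.commutator_subset_ker lam (hsub s.1 s.2)
        show rightHom (Λ (isoK (emb s))) = 1
        rw [h1, h2, h3]
      · intro i hi
        refine Finset.mem_biUnion.mpr ⟨s, Finset.mem_attach _ _, ?_⟩
        simpa [Finsupp.mem_support_iff] using hi
    exact hle hx
  have hmem : ∀ n : ℕ, 1 ≤ n → ((n:ℤ)) ∈ F := by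
    intro n hn
    have hcK : c n ∈ K := comm_le_K (c_mem n)
    have hx : (⟨c n, hcK⟩ : K) ∈ (commutator (WB 2)).subgroupOf K := by
      rw [Subgroup.mem_subgroupOf]
      exact c_mem n
    have hP := hkey _ hx
    have hiso : isoK (⟨c n, hcK⟩ : K) = wn n := isoK_eq _ _ (fwd_c n)
    rw [hiso, lam_wn, mem_P] at hP
    obtain ⟨-, h2⟩ := hP
    refine h2 (n:ℤ) ?_
    rw [SemidirectProduct.left_inl, toAdd_ofAdd, Finsupp.sub_apply, Finsupp.equivMapDomain_apply,
      Sl_apply_self]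
    rw [show ((Equiv.addRight (1:ℤ)).symm (n:ℤ)) = (n:ℤ) - 1 by simp [sub_eq_add_neg], Sl_apply_pred n hn]
    omega
  -- contradiction with finiteness of `F`
  set Bn := (F.image Int.toNat).sup id + 1 with hBn
  have h1 := hmem Bn (by omega)
  have h2 : Int.toNat ((Bn:ℕ):ℤ) ∈ F.image Int.toNat := Finset.mem_image_of_mem _ h1
  have h3 : Bn ≤ (F.image Int.toNat).sup id := by
    have := Finset.le_sup (f := id) h2
    simpa using this
  omega

theorem main :
    (∃ ι : Type, Infinite ι ∧ Nonempty ((↥(commutator (WB 2))) ≃* FreeGroup ι)) ∧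
      ¬ (commutator (WB 2)).FG := by
  refine ⟨⟨IsFreeGroup.Generators C', ?_, ⟨commIso⟩⟩, not_fg⟩
  by_contra h
  rw [not_infinite_iff_finite] at h
  have hfree : Group.FG (FreeGroup (IsFreeGroup.Generators C')) := by
    rw [Group.fg_iff]
    exact ⟨Set.range FreeGroup.of, FreeGroup.closure_range_of _, Set.finite_range _⟩
  haveI := hfree
  have hcomm : Group.FG ↥(commutator (WB 2)) :=
    Group.fg_of_surjective (f := commIso.symm.toMonoidHom) commIso.symm.surjective
  exact not_fg ((Group.fg_iff_subgroup_fg _).mp hcomm)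

end WBtwo

/-- The commutator subgroup of $WB_2$ is an infinitely generated free group. -/
theorem commutator_WB_two :
    (∃ ι : Type, Infinite ι ∧ Nonempty ((↥(commutator (WB 2))) ≃* FreeGroup ι)) ∧
      ¬ (commutator (WB 2)).FG := by
  exact WBtwo.main
end
end
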